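/- arXiv:2505.08967 — 10 statements merged into one kernel-verified Lean document; each statement's English description precedes it below -/
import Mathlib

section
/- Let n ≥ 2 and let 𝒜 be an n×n sign pattern. Suppose i ≠ j are indices such that 𝒜_{ii} = 𝒜_{jj} = 0, row i and column i of 𝒜 each have exactly one zero entry, and row j and column j of 𝒜 each have exactly one zero entry. Then for every A ∈ Q(𝒜) and every real n×n matrix X, if A∘X = 0 and XᵀA − AXᵀ = 0, then X_{ii} = X_{jj}. -/
open Matrix

def QClass {n : ℕ} (𝒜 : Matrix (Fin n) (Fin n) SignType) : Set (Matrix (Fin n) (Fin n) ℝ) :=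
  {A | ∀ i j, SignType.sign (A i j) = 𝒜 i j}

theorem stmt_0 {n : ℕ} (hn : 2 ≤ n) (𝒜 : Matrix (Fin n) (Fin n) SignType)
    (i j : Fin n) (hij : i ≠ j)
    (hii : 𝒜 i i = 0) (hjj : 𝒜 j j = 0)
    (hrow_i : (Finset.univ.filter (fun k => 𝒜 i k = 0)).card = 1)
    (hcol_i : (Finset.univ.filter (fun k => 𝒜 k i = 0)).card = 1)
    (hrow_j : (Finset.univ.filter (fun k => 𝒜 j k = 0)).card = 1)
    (hcol_j : (Finset.univ.filter (fun k => 𝒜 k j = 0)).card = 1)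
    (A : Matrix (Fin n) (Fin n) ℝ) (hA : A ∈ QClass 𝒜)
    (X : Matrix (Fin n) (Fin n) ℝ)
    (hhad : A.hadamard X = 0)
    (hcomm : Xᵀ * A - A * Xᵀ = 0) :
    X i i = X j j := by
  -- A k l = 0 ↔ 𝒜 k l = 0
  have hAzero : ∀ k l, A k l = 0 ↔ 𝒜 k l = 0 := by
    intro k l
    rw [← hA k l, sign_eq_zero_iff]
  -- unique zero extraction
  have huniq : ∀ (f : Fin n → SignType), (Finset.univ.filter (fun k => f k = 0)).card = 1 →
      ∀ a, f a = 0 → ∀ k, f k = 0 → k = a := by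
    intro f hf a ha k hk
    obtain ⟨b, hb⟩ := Finset.card_eq_one.mp hf
    have h1 : a ∈ Finset.univ.filter (fun k => f k = 0) := by simp [ha]
    have h2 : k ∈ Finset.univ.filter (fun k => f k = 0) := by simp [hk]
    rw [hb, Finset.mem_singleton] at h1 h2
    rw [h2, h1]
  have hXzero : ∀ k l, A k l ≠ 0 → X k l = 0 := by
    intro k l hkl
    have := congrFun (congrFun hhad k) l
    simp [Matrix.hadamard] at this
    rcases this with h | h
    · exact absurd h hkl
    · exact h
  -- X k i = 0 for k ≠ i
  have hXcoli : ∀ k, k ≠ i → X k i = 0 := fun k hk =>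
    hXzero k i (fun h => hk (huniq (fun k => 𝒜 k i) hcol_i i hii k ((hAzero k i).mp h)))
  have hXrowj : ∀ k, k ≠ j → X j k = 0 := fun k hk =>
    hXzero j k (fun h => hk (huniq (fun k => 𝒜 j k) hrow_j j hjj k ((hAzero j k).mp h)))
  have hAij : A i j ≠ 0 := fun h =>
    hij ((huniq (fun k => 𝒜 i k) hrow_i i hii j ((hAzero i j).mp h)).symm)
  have hc := congrFun (congrFun hcomm i) j
  simp only [Matrix.sub_apply, Matrix.mul_apply, Matrix.transpose_apply,
    Matrix.zero_apply, sub_eq_zero] at hc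
  rw [Finset.sum_eq_single i (fun k _ hk => by rw [hXcoli k hk, zero_mul])
      (by simp), Finset.sum_eq_single j (fun k _ hk => by rw [hXrowj k hk, mul_zero])
      (by simp)] at hc
  exact mul_left_cancel₀ hAij (by linarith [hc])
end

section
/- If 𝒜 is an n×n sign pattern all of whose off-diagonal entries are nonzero (the diagonal entries are arbitrary), then 𝒜 requires the nSMP. -/
open Matrix

def HasNSMP {n : ℕ} (A : Matrix (Fin n) (Fin n) ℝ) : Prop :=
  ∀ X : Matrix (Fin n) (Fin n) ℝ,
    A.hadamard X = 0 →
    A * Xᵀ - Xᵀ * A = 0 →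
    (∀ k : ℕ, k < n → (Xᵀ * A ^ k).trace = 0) →
    X = 0

def RequiresNSMP {n : ℕ} (𝒜 : Matrix (Fin n) (Fin n) SignType) : Prop :=
  ∀ A ∈ QClass 𝒜, HasNSMP A

theorem stmt_1 {n : ℕ} (𝒜 : Matrix (Fin n) (Fin n) SignType)
    (hoff : ∀ i j : Fin n, i ≠ j → 𝒜 i j ≠ 0) :
    RequiresNSMP 𝒜 := by
  intro A hA X hH hC htr
  -- A is nonzero off the diagonal
  have hAne : ∀ i j : Fin n, i ≠ j → A i j ≠ 0 := by
    intro i j hij h0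
    exact hoff i j hij (by rw [← hA i j, h0, sign_zero])
  -- X is diagonal
  have hXoff : ∀ i j : Fin n, i ≠ j → X i j = 0 := by
    intro i j hij
    have := congrFun (congrFun hH i) j
    simp [Matrix.hadamard] at this
    rcases this with h | h
    · exact absurd h (hAne i j hij)
    · exact h
  -- diagonal entries are equal
  have hdiag : ∀ i j : Fin n, X i i = X j j := by
    intro i j
    by_cases hij : i = j
    · rw [hij]
    · have := congrFun (congrFun hC i) j
      simp only [Matrix.sub_apply, Matrix.mul_apply, Matrix.transpose_apply,
        Matrix.zero_apply] at this
      have h1 : ∑ k, A i k * X j k = A i j * X j j := by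
        rw [Finset.sum_eq_single j]
        · intro k _ hk
          rw [hXoff j k (Ne.symm hk), mul_zero]
        · simp
      have h2 : ∑ k, X k i * A k j = X i i * A i j := by
        rw [Finset.sum_eq_single i]
        · intro k _ hk
          rw [hXoff k i hk, zero_mul]
        · simp
      rw [h1, h2, sub_eq_zero] at this
      have h3 : A i j * X j j = A i j * X i i := by rw [this]; ring
      exact (mul_left_cancel₀ (hAne i j hij) h3).symm
  -- conclude
  funext i j
  by_cases hij : i = j
  · subst hij
    have h0 : 0 < n := i.pos
    have := htr 0 h0
    simp only [pow_zero, Matrix.mul_one, Matrix.trace, Matrix.diag,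
      Matrix.transpose_apply] at this
    have hsum : ∑ k : Fin n, X k k = (n : ℝ) * X i i := by
      rw [Finset.sum_congr rfl (fun k _ => hdiag k i)]
      simp [mul_comm]
    rw [hsum] at this
    have hn : (n : ℝ) ≠ 0 := Nat.cast_ne_zero.mpr h0.ne'
    simpa using (mul_eq_zero.mp this).resolve_left hn
  · exact hXoff i j hij
end

section
/- Let 𝒜 be an n×n star sign pattern and suppose there are two distinct non-centre vertices j and k with 𝒜_{jj} = 𝒜_{kk} = 0 such that the 2-cycles incident to j and k have opposite signs (i.e., one of the products 𝒜_{1j}·𝒜_{j1} and 𝒜_{1k}·𝒜_{k1} is positive and the other is negative). Then 𝒜 does not require the nSMP. -/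
open Matrix

def AllowsNSMP {n : ℕ} (𝒜 : Matrix (Fin n) (Fin n) SignType) : Prop :=
  ∃ A ∈ QClass 𝒜, HasNSMP A

/-- A star sign pattern: vertex `0` is the centre, every non-centre vertex is joined
to the centre by a `2`-cycle, and there are no arcs between distinct non-centre
vertices.  Diagonal entries are arbitrary. -/
def IsStarPattern {n : ℕ} [NeZero n] (𝒜 : Matrix (Fin n) (Fin n) SignType) : Prop :=
  (∀ j : Fin n, j ≠ 0 → 𝒜 0 j ≠ 0 ∧ 𝒜 j 0 ≠ 0) ∧
  (∀ i j : Fin n, i ≠ 0 → j ≠ 0 → i ≠ j → 𝒜 i j = 0)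

private lemma sum_two_aux {n : ℕ} (j k : Fin n) (hjk : j ≠ k) (f : Fin n → ℝ)
    (h : ∀ m, m ≠ j → m ≠ k → f m = 0) : (∑ m, f m) = f j + f k := by
  classical
  rw [← Finset.sum_subset (Finset.subset_univ ({j, k} : Finset (Fin n)))]
  · exact Finset.sum_pair hjk
  · intro x _ hx
    simp only [Finset.mem_insert, Finset.mem_singleton] at hx
    push_neg at hx
    exact h x hx.1 hx.2

theorem stmt_3 {n : ℕ} [NeZero n] (hn : 2 ≤ n) (𝒜 : Matrix (Fin n) (Fin n) SignType)
    (hstar : IsStarPattern 𝒜)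
    (j k : Fin n) (hj : j ≠ 0) (hk : k ≠ 0) (hjk : j ≠ k)
    (hjj : 𝒜 j j = 0) (hkk : 𝒜 k k = 0)
    (hsign : (𝒜 0 j * 𝒜 j 0 = 1 ∧ 𝒜 0 k * 𝒜 k 0 = -1) ∨
             (𝒜 0 j * 𝒜 j 0 = -1 ∧ 𝒜 0 k * 𝒜 k 0 = 1)) :
    ¬ RequiresNSMP 𝒜 := by
  classical
  intro hreq
  have hkj : k ≠ j := hjk.symm
  set A : Matrix (Fin n) (Fin n) ℝ := fun p q => ((𝒜 p q : ℝ)) with hA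
  have hmem : A ∈ QClass 𝒜 := by
    intro p q
    show SignType.sign ((𝒜 p q : ℝ)) = 𝒜 p q
    cases h : 𝒜 p q <;> simp [sign_neg]
  set aj : ℝ := ((𝒜 0 j : ℝ)) with haj
  set ak : ℝ := ((𝒜 0 k : ℝ)) with hak
  set bj : ℝ := ((𝒜 j 0 : ℝ)) with hbj
  set bk : ℝ := ((𝒜 k 0 : ℝ)) with hbk
  have hcj : aj * bj = ((𝒜 0 j * 𝒜 j 0 : SignType) : ℝ) := by
    rw [SignType.coe_mul]
  have hck : ak * bk = ((𝒜 0 k * 𝒜 k 0 : SignType) : ℝ) := by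
    rw [SignType.coe_mul]
  have h1 : aj * bj + ak * bk = 0 := by
    rcases hsign with ⟨e1, e2⟩ | ⟨e1, e2⟩ <;> rw [hcj, hck, e1, e2] <;> norm_num
  have h2 : ak * bk ≠ 0 := by
    rcases hsign with ⟨e1, e2⟩ | ⟨e1, e2⟩ <;> rw [hck, e2] <;> norm_num
  set X : Matrix (Fin n) (Fin n) ℝ := fun p q =>
    if p = j then (if q = j then ak * bk else if q = k then -(aj * bk) else 0)
    else if p = k then (if q = j then -(ak * bj) else if q = k then aj * bj else 0)
    else 0 with hXdef
  have eXjj : X j j = ak * bk := by simp [hXdef]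
  have eXjk : X j k = -(aj * bk) := by simp [hXdef, hkj]
  have eXkj : X k j = -(ak * bj) := by simp [hXdef, hkj]
  have eXkk : X k k = aj * bj := by simp [hXdef, hkj]
  -- zero-entry facts about A
  have hAjj : A j j = 0 := by simp [hA, hjj]
  have hAkk : A k k = 0 := by simp [hA, hkk]
  have hcolj : ∀ p : Fin n, p ≠ 0 → A p j = 0 := by
    intro p hp
    by_cases hpj : p = j
    · rw [hpj]; exact hAjj
    · simp [hA, hstar.2 p j hp hj hpj]
  have hcolk : ∀ p : Fin n, p ≠ 0 → A p k = 0 := by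
    intro p hp
    by_cases hpk : p = k
    · rw [hpk]; exact hAkk
    · simp [hA, hstar.2 p k hp hk hpk]
  have hrowj : ∀ q : Fin n, q ≠ 0 → A j q = 0 := by
    intro q hq
    by_cases hqj : j = q
    · rw [← hqj]; exact hAjj
    · simp [hA, hstar.2 j q hj hq hqj]
  have hrowk : ∀ q : Fin n, q ≠ 0 → A k q = 0 := by
    intro q hq
    by_cases hqk : k = q
    · rw [← hqk]; exact hAkk
    · simp [hA, hstar.2 k q hk hq hqk]
  -- Hadamard product is zero
  have hHad : A.hadamard X = 0 := by
    ext p q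
    simp only [Matrix.hadamard_apply, Matrix.zero_apply]
    by_cases hpj : p = j
    · by_cases hqj : q = j
      · rw [hpj, hqj, hAjj]; ring
      · by_cases hqk : q = k
        · rw [hpj, hqk, hrowj k hk]; ring
        · rw [hpj]; simp [hXdef, hqj, hqk]
    · by_cases hpk : p = k
      · by_cases hqj : q = j
        · rw [hpk, hqj, hrowk j hj]; ring
        · by_cases hqk : q = k
          · rw [hpk, hqk, hAkk]; ring
          · rw [hpk]; simp [hXdef, hkj, hqj, hqk]
      · simp [hXdef, hpj, hpk]
  -- Xᵀ * A = 0
  have hXA : Xᵀ * A = 0 := by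
    ext p q
    simp only [Matrix.mul_apply, Matrix.transpose_apply, Matrix.zero_apply]
    rw [sum_two_aux j k hjk _ (fun m hm1 hm2 => by simp [hXdef, hm1, hm2])]
    by_cases hq : q = 0
    · by_cases hpj : p = j
      · rw [hq, hpj, eXjj, eXkj]
        show ak * bk * bj + -(ak * bj) * bk = 0
        ring
      · by_cases hpk : p = k
        · rw [hq, hpk, eXjk, eXkk]
          show -(aj * bk) * bj + aj * bj * bk = 0
          ring
        · have e1 : X j p = 0 := by simp [hXdef, hpj, hpk]
          have e2 : X k p = 0 := by simp [hXdef, hkj, hpj, hpk]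
          rw [e1, e2]; ring
    · rw [hrowj q hq, hrowk q hq]; ring
  -- A * Xᵀ = 0
  have hAX : A * Xᵀ = 0 := by
    ext p q
    simp only [Matrix.mul_apply, Matrix.transpose_apply, Matrix.zero_apply]
    rw [sum_two_aux j k hjk _ (fun m hm1 hm2 => by
      have : X q m = 0 := by simp [hXdef, hm1, hm2]
      rw [this]; ring)]
    by_cases hp : p = 0
    · by_cases hqj : q = j
      · rw [hp, hqj, eXjj, eXjk]
        show aj * (ak * bk) + ak * -(aj * bk) = 0
        ring
      · by_cases hqk : q = k
        · rw [hp, hqk, eXkj, eXkk]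
          show aj * -(ak * bj) + ak * (aj * bj) = 0
          ring
        · have e1 : X q j = 0 := by simp [hXdef, hqj, hqk]
          have e2 : X q k = 0 := by simp [hXdef, hqj, hqk]
          rw [e1, e2]; ring
    · rw [hcolj p hp, hcolk p hp]; ring
  -- traces
  have htr : ∀ m : ℕ, m < n → (Xᵀ * A ^ m).trace = 0 := by
    intro m _
    cases m with
    | zero =>
        rw [pow_zero, Matrix.mul_one]
        show (∑ p, X p p) = 0
        rw [sum_two_aux j k hjk _ (fun m hm1 hm2 => by simp [hXdef, hm1, hm2]),
          eXjj, eXkk]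
        linarith [h1]
    | succ s =>
        rw [pow_succ', ← Matrix.mul_assoc, hXA, Matrix.zero_mul, Matrix.trace_zero]
  have hX0 : X ≠ 0 := by
    intro h
    have : X j j = 0 := by rw [h]; rfl
    rw [eXjj] at this
    exact h2 this
  exact hX0 (hreq A hmem X hHad (by rw [hAX, hXA, sub_zero]) htr)
end

section
/- Let 𝒜 be an n×n star sign pattern having three distinct non-centre vertices j, k, ℓ whose diagonal entries 𝒜_{jj}, 𝒜_{kk}, 𝒜_{ℓℓ} are all equal as elements of {+, −, 0} (i.e., three non-centre loops of the same sign, or three loopless non-centre vertices). Then 𝒜 does not require the nSMP. -/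
open Matrix

/-! ### Auxiliary machinery -/

lemma castSign_eq (s : SignType) : SignType.sign ((s : ℝ)) = s := by
  cases s <;> simp [sign_eq_neg_one_iff]

lemma castNe_zero {s : SignType} (h : s ≠ 0) : (s : ℝ) ≠ 0 := by
  cases s <;> simp_all

/-- cast matrix of a sign pattern -/
def starA {n : ℕ} (𝒜 : Matrix (Fin n) (Fin n) SignType) : Matrix (Fin n) (Fin n) ℝ :=
  fun i m => ((𝒜 i m : ℝ))

@[simp] lemma starA_apply {n : ℕ} (𝒜 : Matrix (Fin n) (Fin n) SignType) (i m : Fin n) :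
    starA 𝒜 i m = ((𝒜 i m : ℝ)) := rfl

/-- the witness matrix X -/
def Xmat {n : ℕ} [NeZero n] (A : Matrix (Fin n) (Fin n) ℝ) (j k l : Fin n) :
    Matrix (Fin n) (Fin n) ℝ := fun p q =>
  if p = j ∧ q = k then A 0 j * A 0 l * A k 0 * A l 0
  else if p = j ∧ q = l then -(A 0 j * A 0 k * A k 0 * A l 0)
  else if p = l ∧ q = k then -(A 0 j * A 0 l * A j 0 * A k 0)
  else if p = l ∧ q = j then A 0 k * A 0 l * A j 0 * A k 0
  else if p = k ∧ q = j then -(A 0 k * A 0 l * A j 0 * A l 0)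
  else if p = k ∧ q = l then A 0 j * A 0 k * A j 0 * A l 0
  else 0

/-- the walk vector ψ -/
def psiAux {n : ℕ} [NeZero n] (A : Matrix (Fin n) (Fin n) ℝ) (d : ℝ) : ℕ → Fin n → ℝ
  | 0 => 0
  | (m+1) => fun s => (∑ t, psiAux A d m t * A t s) + d ^ m * (if s = 0 then 1 else 0)

lemma sum3 {n : ℕ} (j k l : Fin n) (hjk : j ≠ k) (hjl : j ≠ l) (hkl : k ≠ l)
    (f : Fin n → ℝ) (h : ∀ q, q ≠ j → q ≠ k → q ≠ l → f q = 0) :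
    ∑ q, f q = f j + f k + f l := by
  have h1 : ∑ q, f q = ∑ q ∈ ({j, k, l} : Finset (Fin n)), f q := by
    refine (Finset.sum_subset (Finset.subset_univ _) ?_).symm
    intro x _ hx
    simp only [Finset.mem_insert, Finset.mem_singleton] at hx
    push_neg at hx
    exact h x hx.1 hx.2.1 hx.2.2
  rw [h1]
  rw [Finset.sum_insert (by simp [hjk, hjl]), Finset.sum_insert (by simp [hkl]),
    Finset.sum_singleton, add_assoc]

lemma sumH1 {n : ℕ} (b : Fin n) (f : Fin n → ℝ) :
    ∑ p, (if p = b then (1:ℝ) else 0) * f p = f b := by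
  simp [ite_mul]

lemma sumH2 {n : ℕ} (b : Fin n) (f : Fin n → ℝ) :
    ∑ p, (if b = p then f p else 0) = f b := by
  simp

lemma sumH2' {n : ℕ} (b : Fin n) (f : Fin n → ℝ) :
    ∑ p, (if p = b then f p else 0) = f b := by
  simp

theorem stmt_4 {n : ℕ} [NeZero n] (hn : 2 ≤ n) (𝒜 : Matrix (Fin n) (Fin n) SignType)
    (hstar : IsStarPattern 𝒜)
    (j k l : Fin n) (hj : j ≠ 0) (hk : k ≠ 0) (hl : l ≠ 0)
    (hjk : j ≠ k) (hjl : j ≠ l) (hkl : k ≠ l)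
    (heq1 : 𝒜 j j = 𝒜 k k) (heq2 : 𝒜 k k = 𝒜 l l) :
    ¬ RequiresNSMP 𝒜 := by
  intro hreq
  set A : Matrix (Fin n) (Fin n) ℝ := starA 𝒜 with hAdef
  set X : Matrix (Fin n) (Fin n) ℝ := Xmat A j k l with hXdef
  set dA : ℝ := A j j with hdAdef
  -- membership in the qualitative class
  have hAQ : A ∈ QClass 𝒜 := fun i m => castSign_eq (𝒜 i m)
  -- star zeros
  have hAzero : ∀ p q : Fin n, p ≠ 0 → q ≠ 0 → p ≠ q → A p q = 0 := by
    intro p q hp hq hpq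
    show ((𝒜 p q : ℝ)) = 0
    rw [hstar.2 p q hp hq hpq]; rfl
  -- equal diagonal among j k l
  have hAd : ∀ p : Fin n, (p = j ∨ p = k ∨ p = l) → A p p = dA := by
    have h2 : A k k = A j j := by show ((𝒜 k k : ℝ)) = ((𝒜 j j : ℝ)); rw [heq1]
    have h3 : A l l = A j j := by show ((𝒜 l l : ℝ)) = ((𝒜 j j : ℝ)); rw [heq1, heq2]
    intro p hp
    rcases hp with rfl | rfl | rfl
    · rfl
    · exact h2
    · exact h3
  -- vanishing of X off the support rows/columns
  have hXz1 : ∀ p q : Fin n, p ≠ j → p ≠ k → p ≠ l → X p q = 0 := by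
    intro p q h1 h2 h3
    show Xmat A j k l p q = 0
    simp [Xmat, h1, h2, h3]
  have hXz2 : ∀ p q : Fin n, q ≠ j → q ≠ k → q ≠ l → X p q = 0 := by
    intro p q h1 h2 h3
    show Xmat A j k l p q = 0
    simp [Xmat, h1, h2, h3]
  have hrow0 : ∀ q, X 0 q = 0 := fun q => hXz1 0 q (Ne.symm hj) (Ne.symm hk) (Ne.symm hl)
  have hcol0 : ∀ p, X p 0 = 0 := fun p => hXz2 p 0 (Ne.symm hj) (Ne.symm hk) (Ne.symm hl)
  -- explicit entries
  have eXjj : X j j = 0 := by show Xmat A j k l j j = 0; simp [Xmat, hjk, hjl]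
  have eXjk : X j k = A 0 j * A 0 l * A k 0 * A l 0 := by
    show Xmat A j k l j k = _; simp [Xmat]
  have eXjl : X j l = -(A 0 j * A 0 k * A k 0 * A l 0) := by
    show Xmat A j k l j l = _; simp [Xmat, Ne.symm hkl]
  have eXkj : X k j = -(A 0 k * A 0 l * A j 0 * A l 0) := by
    show Xmat A j k l k j = _; simp [Xmat, Ne.symm hjk, hkl]
  have eXkk : X k k = 0 := by show Xmat A j k l k k = 0; simp [Xmat, Ne.symm hjk, hkl]
  have eXkl : X k l = A 0 j * A 0 k * A j 0 * A l 0 := by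
    show Xmat A j k l k l = _; simp [Xmat, Ne.symm hjk, hkl, Ne.symm hjl]
  have eXlj : X l j = A 0 k * A 0 l * A j 0 * A k 0 := by
    show Xmat A j k l l j = _; simp [Xmat, Ne.symm hjl, hjk]
  have eXlk : X l k = -(A 0 j * A 0 l * A j 0 * A k 0) := by
    show Xmat A j k l l k = _; simp [Xmat, Ne.symm hjl]
  have eXll : X l l = 0 := by
    show Xmat A j k l l l = 0; simp [Xmat, Ne.symm hjl, Ne.symm hkl]
  -- support of X
  have hsupp : ∀ p q : Fin n, X p q ≠ 0 →
      (p = j ∨ p = k ∨ p = l) ∧ (q = j ∨ q = k ∨ q = l) ∧ p ≠ q := by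
    intro p q h
    have h' : Xmat A j k l p q ≠ 0 := h
    unfold Xmat at h'
    split_ifs at h' with h1 h2 h3 h4 h5 h6
    · obtain ⟨rfl, rfl⟩ := h1; exact ⟨Or.inl rfl, Or.inr (Or.inl rfl), hjk⟩
    · obtain ⟨rfl, rfl⟩ := h2; exact ⟨Or.inl rfl, Or.inr (Or.inr rfl), hjl⟩
    · obtain ⟨rfl, rfl⟩ := h3; exact ⟨Or.inr (Or.inr rfl), Or.inr (Or.inl rfl), Ne.symm hkl⟩
    · obtain ⟨rfl, rfl⟩ := h4; exact ⟨Or.inr (Or.inr rfl), Or.inl rfl, Ne.symm hjl⟩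
    · obtain ⟨rfl, rfl⟩ := h5; exact ⟨Or.inr (Or.inl rfl), Or.inl rfl, Ne.symm hjk⟩
    · obtain ⟨rfl, rfl⟩ := h6; exact ⟨Or.inr (Or.inl rfl), Or.inr (Or.inr rfl), hkl⟩
    · exact absurd rfl h'
  -- the two orthogonality relations
  have hc : ∀ m : Fin n, (∑ p, (if p = 0 then (0:ℝ) else A 0 p) * X m p) = 0 := by
    intro m
    rw [sum3 j k l hjk hjl hkl _ (fun q h1 h2 h3 => by rw [hXz2 m q h1 h2 h3, mul_zero])]
    rw [if_neg hj, if_neg hk, if_neg hl]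
    rcases eq_or_ne m j with rfl | hmj
    · rw [eXjj, eXjk, eXjl]; ring
    · rcases eq_or_ne m k with rfl | hmk
      · rw [eXkj, eXkk, eXkl]; ring
      · rcases eq_or_ne m l with rfl | hml
        · rw [eXlj, eXlk, eXll]; ring
        · rw [hXz1 m j hmj hmk hml, hXz1 m k hmj hmk hml, hXz1 m l hmj hmk hml]; ring
  have hr : ∀ i : Fin n, (∑ p, (if p = 0 then (0:ℝ) else A p 0) * X p i) = 0 := by
    intro i
    rw [sum3 j k l hjk hjl hkl _ (fun q h1 h2 h3 => by rw [hXz1 q i h1 h2 h3, mul_zero])]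
    rw [if_neg hj, if_neg hk, if_neg hl]
    rcases eq_or_ne i j with rfl | hij
    · rw [eXjj, eXkj, eXlj]; ring
    · rcases eq_or_ne i k with rfl | hik
      · rw [eXjk, eXkk, eXlk]; ring
      · rcases eq_or_ne i l with rfl | hil
        · rw [eXjl, eXkl, eXll]; ring
        · rw [hXz2 j i hij hik hil, hXz2 k i hij hik hil, hXz2 l i hij hik hil]; ring
  -- rank-one plus diagonal decomposition of A
  have key : ∀ i p : Fin n, A i p =
      (if i = 0 then (1:ℝ) else 0) * (if p = 0 then (0:ℝ) else A 0 p)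
      + (if i = 0 then (0:ℝ) else A i 0) * (if p = 0 then (1:ℝ) else 0)
      + (if i = p then A i i else 0) := by
    intro i p
    rcases eq_or_ne i 0 with rfl | hi
    · rcases eq_or_ne p 0 with rfl | hp
      · simp
      · simp [hp, Ne.symm hp]
    · rcases eq_or_ne p 0 with rfl | hp
      · simp [hi, hi]
      · rcases eq_or_ne i p with rfl | hip
        · simp [hi]
        · simp [hi, hp, hip, hAzero i p hi hp hip]
  -- row sums
  have hsum1 : ∀ i m : Fin n, (∑ p, A i p * X m p) = A i i * X m i := by
    intro i m
    have e : ∀ p, A i p * X m p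
        = (if i = 0 then (1:ℝ) else 0) * ((if p = 0 then (0:ℝ) else A 0 p) * X m p)
        + (if i = 0 then (0:ℝ) else A i 0) * ((if p = 0 then (1:ℝ) else 0) * X m p)
        + (if i = p then A i i * X m p else 0) := by
      intro p; rw [key i p]; split_ifs <;> ring
    rw [Finset.sum_congr rfl (fun p _ => e p), Finset.sum_add_distrib, Finset.sum_add_distrib,
      ← Finset.mul_sum, ← Finset.mul_sum, hc m, sumH1 0 (fun p => X m p),
      sumH2 i (fun p => A i i * X m p), hcol0 m]
    ring
  -- column sums
  have hsum2 : ∀ i m : Fin n, (∑ p, X p i * A p m) = A m m * X m i := by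
    intro i m
    have e : ∀ p, X p i * A p m
        = (if p = 0 then (1:ℝ) else 0) * ((if m = 0 then (0:ℝ) else A 0 m) * X p i)
        + (if m = 0 then (1:ℝ) else 0) * ((if p = 0 then (0:ℝ) else A p 0) * X p i)
        + (if p = m then A p p * X p i else 0) := by
      intro p; rw [key p m]; split_ifs <;> ring
    rw [Finset.sum_congr rfl (fun p _ => e p), Finset.sum_add_distrib, Finset.sum_add_distrib,
      sumH1 0 (fun p => (if m = 0 then (0:ℝ) else A 0 m) * X p i),
      ← Finset.mul_sum, hr i, sumH2' m (fun p => A p p * X p i), hrow0 i]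
    ring
  -- hadamard condition
  have hhad : A.hadamard X = 0 := by
    ext p q
    show A p q * X p q = 0
    rcases eq_or_ne (X p q) 0 with h | h
    · rw [h, mul_zero]
    · obtain ⟨hp, hq, hpq⟩ := hsupp p q h
      have hp0 : p ≠ 0 := by rcases hp with rfl | rfl | rfl <;> assumption
      have hq0 : q ≠ 0 := by rcases hq with rfl | rfl | rfl <;> assumption
      rw [hAzero p q hp0 hq0 hpq, zero_mul]
  -- commutation condition
  have hcomm : A * Xᵀ - Xᵀ * A = 0 := by
    ext i m
    show (A * Xᵀ) i m - (Xᵀ * A) i m = 0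
    rw [Matrix.mul_apply, Matrix.mul_apply]
    simp only [Matrix.transpose_apply]
    rw [hsum1 i m, hsum2 i m]
    rcases eq_or_ne (X m i) 0 with h | h
    · rw [h]; ring
    · obtain ⟨hm, hi, _⟩ := hsupp m i h
      rw [hAd i hi, hAd m hm]
      ring
  -- row structure for powers
  have hArow : ∀ p : Fin n, (p = j ∨ p = k ∨ p = l) → ∀ s,
      A p s = (if s = 0 then A p 0 else 0) + (if p = s then dA else 0) := by
    intro p hp s
    have hp0 : p ≠ 0 := by rcases hp with rfl | rfl | rfl <;> assumption
    rcases eq_or_ne s 0 with rfl | hs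
    · simp [hp0]
    · rcases eq_or_ne p s with rfl | hps
      · simp [hs, hAd p hp]
      · simp [hs, hps, hAzero p s hp0 hs hps]
  -- power formula
  have hpow : ∀ m : ℕ, ∀ p : Fin n, (p = j ∨ p = k ∨ p = l) → ∀ s,
      (A ^ m) p s = A p 0 * psiAux A dA m s + (if p = s then dA ^ m else 0) := by
    intro m
    induction m with
    | zero =>
      intro p _ s
      simp [psiAux, Matrix.one_apply]
    | succ m ih =>
      intro p hp s
      rw [pow_succ, Matrix.mul_apply]
      have e : ∀ t, (A ^ m) p t * A t s
          = A p 0 * (psiAux A dA m t * A t s) + (if p = t then dA ^ m * A t s else 0) := by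
        intro t; rw [ih p hp t]; split_ifs <;> ring
      rw [Finset.sum_congr rfl (fun t _ => e t), Finset.sum_add_distrib, ← Finset.mul_sum,
        sumH2 p (fun t => dA ^ m * A t s), hArow p hp s]
      show A p 0 * (∑ t, psiAux A dA m t * A t s) + _ = A p 0 * psiAux A dA (m + 1) s + _
      simp only [psiAux]
      split_ifs <;> ring
  -- trace condition
  have htr : ∀ m : ℕ, (Xᵀ * A ^ m).trace = 0 := by
    intro m
    rw [Matrix.trace]
    have e1 : ∀ i : Fin n, (Xᵀ * A ^ m).diag i
        = (∑ p, (if p = 0 then (0:ℝ) else A p 0) * X p i) * psiAux A dA m i := by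
      intro i
      rw [Matrix.diag_apply, Matrix.mul_apply, Finset.sum_mul]
      refine Finset.sum_congr rfl fun p _ => ?_
      simp only [Matrix.transpose_apply]
      rcases eq_or_ne (X p i) 0 with h | h
      · rw [h]; ring
      · obtain ⟨hp, _, hpi⟩ := hsupp p i h
        have hp0 : p ≠ 0 := by rcases hp with rfl | rfl | rfl <;> assumption
        rw [hpow m p hp i, if_neg hpi, if_neg hp0]
        ring
    rw [Finset.sum_congr rfl (fun i _ => e1 i)]
    refine Finset.sum_eq_zero fun i _ => ?_
    rw [hr i, zero_mul]
  -- nonzero entry of X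
  have hne : X j k ≠ 0 := by
    rw [eXjk]
    have c1 := castNe_zero (hstar.1 j hj).1
    have c2 := castNe_zero (hstar.1 l hl).1
    have c3 := castNe_zero (hstar.1 k hk).2
    have c4 := castNe_zero (hstar.1 l hl).2
    exact mul_ne_zero (mul_ne_zero (mul_ne_zero c1 c2) c3) c4
  -- conclude
  have hX0 := hreq A hAQ X hhad hcomm (fun m _ => htr m)
  exact hne (by rw [hX0]; rfl)
end

section
/- If 𝒜 is an n×n star sign pattern with n > 7, then 𝒜 does not require the nSMP. -/
open Matrix

/-- The witness matrix `Y` (which plays the role of `Xᵀ`). -/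
def Ym {n : ℕ} (p q r : Fin n) (bp bq br cp cq cr : ℝ) : Matrix (Fin n) (Fin n) ℝ :=
  fun i j =>
    (if i = p then (1:ℝ) else 0) * (if j = q then (1:ℝ) else 0) * (bq * br * cp * cr)
  - (if i = q then (1:ℝ) else 0) * (if j = p then (1:ℝ) else 0) * (bp * br * cq * cr)
  + (if i = q then (1:ℝ) else 0) * (if j = r then (1:ℝ) else 0) * (bp * br * cp * cq)
  - (if i = r then (1:ℝ) else 0) * (if j = q then (1:ℝ) else 0) * (bp * bq * cp * cr)
  + (if i = r then (1:ℝ) else 0) * (if j = p then (1:ℝ) else 0) * (bp * bq * cq * cr)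
  - (if i = p then (1:ℝ) else 0) * (if j = r then (1:ℝ) else 0) * (bq * br * cp * cq)

/-- Auxiliary sequence for powers of a star matrix. -/
def Ffun {n : ℕ} [NeZero n] (A : Matrix (Fin n) (Fin n) ℝ) (d : ℝ) : ℕ → Fin n → ℝ
  | 0 => fun _ => 0
  | (k+1) => fun m => (∑ j, Ffun A d k j * A j m) + (if m = 0 then d ^ k else 0)

theorem aux_star {n : ℕ} [NeZero n] (𝒜 : Matrix (Fin n) (Fin n) SignType)
    (hstar : IsStarPattern 𝒜) (p q r : Fin n)
    (hp : p ≠ 0) (hq : q ≠ 0) (hr : r ≠ 0)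
    (hpq : p ≠ q) (hpr : p ≠ r) (hqr : q ≠ r)
    (hdq : 𝒜 p p = 𝒜 q q) (hdr : 𝒜 p p = 𝒜 r r) :
    ¬ RequiresNSMP 𝒜 := by
  intro hreq
  -- the matrix A : entrywise cast of the sign pattern
  set A : Matrix (Fin n) (Fin n) ℝ := fun i j => ((𝒜 i j : ℝ)) with hA
  have hAdef : ∀ i j, A i j = ((𝒜 i j : ℝ)) := fun i j => rfl
  have hcast0 : ∀ s : SignType, (s : ℝ) = 0 ↔ s = 0 := by
    intro s
    cases s <;> simp [SignType.coe_neg_one, SignType.coe_one, SignType.coe_zero]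
  have hAQ : A ∈ QClass 𝒜 := by
    intro i j
    rw [hAdef]
    cases 𝒜 i j <;> norm_num
  -- nonzero entries
  have hbp : A 0 p ≠ 0 := fun h => (hstar.1 p hp).1 ((hcast0 _).mp h)
  have hbq : A 0 q ≠ 0 := fun h => (hstar.1 q hq).1 ((hcast0 _).mp h)
  have hbr : A 0 r ≠ 0 := fun h => (hstar.1 r hr).1 ((hcast0 _).mp h)
  have hcp : A p 0 ≠ 0 := fun h => (hstar.1 p hp).2 ((hcast0 _).mp h)
  have hcq : A q 0 ≠ 0 := fun h => (hstar.1 q hq).2 ((hcast0 _).mp h)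
  have hcr : A r 0 ≠ 0 := fun h => (hstar.1 r hr).2 ((hcast0 _).mp h)
  -- zero off-star entries
  have hAzero : ∀ i j : Fin n, i ≠ 0 → j ≠ 0 → i ≠ j → A i j = 0 := by
    intro i j h1 h2 h3
    rw [hAdef, hstar.2 i j h1 h2 h3]; norm_num
  -- equal diagonal entries
  have hdAq : A q q = A p p := by rw [hAdef, hAdef, hdq]
  have hdAr : A r r = A p p := by rw [hAdef, hAdef, hdr]
  set d : ℝ := A p p with hd
  set Y : Matrix (Fin n) (Fin n) ℝ :=
    Ym p q r (A 0 p) (A 0 q) (A 0 r) (A p 0) (A q 0) (A r 0) with hY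
  -- support lemmas for Y
  have hYleft : ∀ i j : Fin n, i ≠ p → i ≠ q → i ≠ r → Y i j = 0 := by
    intro i j h1 h2 h3; simp [hY, Ym, h1, h2, h3]
  have hYright : ∀ i j : Fin n, j ≠ p → j ≠ q → j ≠ r → Y i j = 0 := by
    intro i j h1 h2 h3; simp [hY, Ym, h1, h2, h3]
  have hYdiag : ∀ i : Fin n, Y i i = 0 := by
    intro i
    by_cases h1 : i = p
    · subst h1; simp [hY, Ym, hpq, hpr, Ne.symm hpq, Ne.symm hpr]
    by_cases h2 : i = q
    · subst h2; simp [hY, Ym, hqr, Ne.symm hpq, Ne.symm hqr]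
    by_cases h3 : i = r
    · subst h3; simp [hY, Ym, Ne.symm hpr, Ne.symm hqr]
    exact hYleft i i h1 h2 h3
  -- sum reduction
  have hsum3 : ∀ f : Fin n → ℝ, (∀ l, l ≠ p → l ≠ q → l ≠ r → f l = 0) →
      (∑ l, f l) = f p + f q + f r := by
    intro f hf
    rw [← Finset.sum_subset (Finset.subset_univ ({p, q, r} : Finset (Fin n)))
        (fun x _ hx => by
          simp only [Finset.mem_insert, Finset.mem_singleton, not_or] at hx
          exact hf x hx.1 hx.2.1 hx.2.2)]
    rw [Finset.sum_insert (by simp [hpq, hpr]), Finset.sum_insert (by simp [hqr]),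
        Finset.sum_singleton]
    ring
  -- row identity : Y i p * A p 0 + Y i q * A q 0 + Y i r * A r 0 = 0
  have hrowc : ∀ i : Fin n,
      Y i p * A p 0 + Y i q * A q 0 + Y i r * A r 0 = 0 := by
    intro i
    simp only [hY, Ym, if_pos rfl, if_neg hpq, if_neg hpr, if_neg hqr,
      if_neg (Ne.symm hpq), if_neg (Ne.symm hpr), if_neg (Ne.symm hqr)]
    ring
  -- column identity
  have hcolb : ∀ j : Fin n,
      A 0 p * Y p j + A 0 q * Y q j + A 0 r * Y r j = 0 := by
    intro j
    simp only [hY, Ym, if_pos rfl, if_neg hpq, if_neg hpr, if_neg hqr,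
      if_neg (Ne.symm hpq), if_neg (Ne.symm hpr), if_neg (Ne.symm hqr)]
    ring
  -- off-star zero entries of A among {p,q,r}
  have hApq : A p q = 0 := hAzero p q hp hq hpq
  have hApr : A p r = 0 := hAzero p r hp hr hpr
  have hAqp : A q p = 0 := hAzero q p hq hp (Ne.symm hpq)
  have hAqr : A q r = 0 := hAzero q r hq hr hqr
  have hArp : A r p = 0 := hAzero r p hr hp (Ne.symm hpr)
  have hArq : A r q = 0 := hAzero r q hr hq (Ne.symm hqr)
  -- Claim 1 : A * Y = d • Y entrywise
  have hclaim1 : ∀ i j, (A * Y) i j = d * Y i j := by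
    intro i j
    rw [Matrix.mul_apply, hsum3 _ (fun l h1 h2 h3 => by rw [hYleft l j h1 h2 h3, mul_zero])]
    by_cases hi0 : i = 0
    · subst hi0
      rw [hYleft 0 j (Ne.symm hp) (Ne.symm hq) (Ne.symm hr), mul_zero]
      exact hcolb j
    by_cases hip : i = p
    · subst hip; rw [hApq, hApr, hd]; ring
    by_cases hiq : i = q
    · subst hiq; rw [hAqp, hAqr, hdAq]; ring
    by_cases hir : i = r
    · subst hir; rw [hArp, hArq, hdAr]; ring
    · rw [hAzero i p hi0 hp hip, hAzero i q hi0 hq hiq, hAzero i r hi0 hr hir,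
        hYleft i j hip hiq hir]; ring
  -- Claim 2 : Y * A = d • Y entrywise
  have hclaim2 : ∀ i j, (Y * A) i j = d * Y i j := by
    intro i j
    rw [Matrix.mul_apply, hsum3 _ (fun l h1 h2 h3 => by rw [hYright i l h1 h2 h3, zero_mul])]
    by_cases hj0 : j = 0
    · subst hj0
      rw [hYright i 0 (Ne.symm hp) (Ne.symm hq) (Ne.symm hr), mul_zero]
      exact hrowc i
    by_cases hjp : j = p
    · subst hjp; rw [hAqp, hArp, hd]; ring
    by_cases hjq : j = q
    · subst hjq; rw [hApq, hArq, hdAq]; ring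
    by_cases hjr : j = r
    · subst hjr; rw [hApr, hAqr, hdAr]; ring
    · rw [hAzero p j hp hj0 (Ne.symm hjp), hAzero q j hq hj0 (Ne.symm hjq),
        hAzero r j hr hj0 (Ne.symm hjr), hYright i j hjp hjq hjr]; ring
  have hXT : (Yᵀ)ᵀ = Y := Matrix.transpose_transpose Y
  have hcomm : A * (Yᵀ)ᵀ - (Yᵀ)ᵀ * A = 0 := by
    rw [hXT, sub_eq_zero]
    ext i j
    rw [hclaim1, hclaim2]
  -- Hadamard condition
  have hhad : A.hadamard (Yᵀ) = 0 := by
    ext i j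
    simp only [Matrix.hadamard_apply, Matrix.transpose_apply, Matrix.zero_apply]
    by_cases h : Y j i = 0
    · rw [h, mul_zero]
    · have hjT : j = p ∨ j = q ∨ j = r := by
        by_contra hc; push_neg at hc; exact h (hYleft j i hc.1 hc.2.1 hc.2.2)
      have hiT : i = p ∨ i = q ∨ i = r := by
        by_contra hc; push_neg at hc; exact h (hYright j i hc.1 hc.2.1 hc.2.2)
      have hne : i ≠ j := by rintro rfl; exact h (hYdiag i)
      have hi0 : i ≠ 0 := by rcases hiT with h'|h'|h' <;> (subst h'; assumption)
      have hj0 : j ≠ 0 := by rcases hjT with h'|h'|h' <;> (subst h'; assumption)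
      rw [hAzero i j hi0 hj0 hne, zero_mul]
  -- structure of the rows of A at p,q,r
  have hAl : ∀ l : Fin n, (l = p ∨ l = q ∨ l = r) → ∀ m : Fin n,
      A l m = (if m = 0 then A l 0 else 0) + (if m = l then d else 0) := by
    intro l hl m
    have hl0 : l ≠ 0 := by rcases hl with h'|h'|h' <;> (subst h'; assumption)
    have hld : A l l = d := by
      rcases hl with h'|h'|h' <;> subst h'
      · rw [hd]
      · exact hdAq
      · exact hdAr
    by_cases hm0 : m = 0
    · subst hm0; rw [if_pos rfl, if_neg (Ne.symm hl0)]; ring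
    by_cases hml : m = l
    · subst hml; rw [if_neg hm0, if_pos rfl, hld]; ring
    · rw [if_neg hm0, if_neg hml, hAzero l m hl0 hm0 (Ne.symm hml)]; ring
  -- powers of A
  have hpow : ∀ l : Fin n, (l = p ∨ l = q ∨ l = r) → ∀ (k : ℕ) (m : Fin n),
      (A ^ k) l m = A l 0 * Ffun A d k m + (if l = m then d ^ k else 0) := by
    intro l hl k
    have hl0 : l ≠ 0 := by rcases hl with h'|h'|h' <;> (subst h'; assumption)
    induction k with
    | zero =>
      intro m
      simp [Ffun, Matrix.one_apply]
    | succ k ih =>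
      intro m
      rw [pow_succ, Matrix.mul_apply]
      have hterm : ∀ jj, (A ^ k) l jj * A jj m
          = A l 0 * (Ffun A d k jj * A jj m) + (if l = jj then d ^ k * A jj m else 0) := by
        intro jj
        rw [ih jj]
        by_cases hlj : l = jj <;> simp [hlj] <;> ring
      rw [Finset.sum_congr rfl (fun jj _ => hterm jj), Finset.sum_add_distrib,
        ← Finset.mul_sum, Finset.sum_ite_eq]
      simp only [Finset.mem_univ, if_true]
      rw [hAl l hl m]
      simp only [Ffun]
      by_cases hm0 : m = 0
      · subst hm0
        rw [if_pos rfl, if_pos rfl, if_neg (Ne.symm hl0), if_neg hl0]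
        ring
      by_cases hml : m = l
      · rw [if_neg hm0, if_neg hm0, if_pos hml, if_pos hml.symm]
        ring
      · rw [if_neg hm0, if_neg hm0, if_neg hml, if_neg (Ne.symm hml)]
        ring
  -- trace conditions
  have htrace : ∀ k : ℕ, ((Yᵀ)ᵀ * A ^ k).trace = 0 := by
    intro k
    rw [hXT]
    have hzero : ∀ i : Fin n, (Y * A ^ k) i i = 0 := by
      intro i
      rw [Matrix.mul_apply, hsum3 _ (fun l h1 h2 h3 => by rw [hYright i l h1 h2 h3, zero_mul])]
      rw [hpow p (Or.inl rfl) k i, hpow q (Or.inr (Or.inl rfl)) k i,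
        hpow r (Or.inr (Or.inr rfl)) k i]
      by_cases h1 : p = i
      · have h2 : ¬ q = i := fun hh => hpq (h1.trans hh.symm)
        have h3 : ¬ r = i := fun hh => hpr (h1.trans hh.symm)
        have hYz : Y i p = 0 := by rw [← h1]; exact hYdiag p
        rw [if_pos h1, if_neg h2, if_neg h3]
        linear_combination Ffun A d k i * hrowc i + d ^ k * hYz
      by_cases h2 : q = i
      · have h3 : ¬ r = i := fun hh => hqr (h2.trans hh.symm)
        have hYz : Y i q = 0 := by rw [← h2]; exact hYdiag q
        rw [if_neg h1, if_pos h2, if_neg h3]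
        linear_combination Ffun A d k i * hrowc i + d ^ k * hYz
      by_cases h3 : r = i
      · have hYz : Y i r = 0 := by rw [← h3]; exact hYdiag r
        rw [if_neg h1, if_neg h2, if_pos h3]
        linear_combination Ffun A d k i * hrowc i + d ^ k * hYz
      · rw [if_neg h1, if_neg h2, if_neg h3]
        linear_combination Ffun A d k i * hrowc i
    have : (Y * A ^ k).trace = ∑ i, (Y * A ^ k) i i := rfl
    rw [this]
    exact Finset.sum_eq_zero fun i _ => hzero i
  -- conclude
  have hX0 := hreq A hAQ (Yᵀ) hhad hcomm (fun k _ => htrace k)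
  have hYpq : Y p q = 0 := by
    have : (Yᵀ) q p = (0 : Matrix (Fin n) (Fin n) ℝ) q p := by rw [hX0]
    simpa using this
  have hval : Y p q = A 0 q * A 0 r * (A p 0 * A r 0) := by
    simp [hY, Ym, hpq, hpr, hqr, Ne.symm hpq, Ne.symm hpr, Ne.symm hqr]
    ring
  rw [hval] at hYpq
  exact (mul_ne_zero (mul_ne_zero hbq hbr) (mul_ne_zero hcp hcr)) hYpq

theorem stmt_6 {n : ℕ} [NeZero n] (hn : 7 < n) (𝒜 : Matrix (Fin n) (Fin n) SignType)
    (hstar : IsStarPattern 𝒜) :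
    ¬ RequiresNSMP 𝒜 := by
  have h7 : 7 ≤ (({0}ᶜ : Finset (Fin n))).card := by
    rw [Finset.card_compl, Finset.card_singleton, Fintype.card_fin]; omega
  have hmaps : ∀ j ∈ ({0}ᶜ : Finset (Fin n)),
      𝒜 j j ∈ (Finset.univ : Finset SignType) := fun _ _ => Finset.mem_univ _
  have hcard : (Finset.univ : Finset SignType).card * 2 < ({0}ᶜ : Finset (Fin n)).card := by
    have h3 : (Finset.univ : Finset SignType).card = 3 := by decide
    omega
  obtain ⟨y, -, hy⟩ := Finset.exists_lt_card_fiber_of_mul_lt_card_of_maps_to hmaps hcard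
  obtain ⟨a, b, c, ha, hb, hc, hab, hac, hbc⟩ := Finset.two_lt_card_iff.mp hy
  rw [Finset.mem_filter, Finset.mem_compl, Finset.mem_singleton] at ha hb hc
  exact aux_star 𝒜 hstar a b c ha.1 hb.1 hc.1 hab hac hbc
    (ha.2.trans hb.2.symm) (ha.2.trans hc.2.symm)
end

section
/- Let 𝒜 be an n×n proper lower Hessenberg sign pattern, i.e., 𝒜_{i,i+1} ≠ 0 for 1 ≤ i < n and 𝒜_{ij} = 0 whenever j ≥ i+2. Suppose that for every k with 1 ≤ k ≤ n−1 there exists an index i with k+1 ≤ i ≤ n and 𝒜_{i,i−k} ≠ 0 (equivalently, the digraph of 𝒜 has at least one k-cycle for each k with 2 ≤ k ≤ n). Then 𝒜 requires the nSMP. -/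
open Matrix

section Helpers

variable {n : ℕ} (A : Matrix (Fin n) (Fin n) ℝ)

lemma pow_band (hA2 : ∀ i j : Fin n, (i : ℕ) + 2 ≤ (j : ℕ) → A i j = 0) :
    ∀ k : ℕ, ∀ i j : Fin n, (i : ℕ) + k < (j : ℕ) → (A ^ k) i j = 0 := by
  intro k
  induction k with
  | zero =>
    intro i j h
    simp only [pow_zero, Matrix.one_apply]
    have : i ≠ j := by
      intro he; subst he; omega
    simp [this]
  | succ k ih =>
    intro i j h
    rw [pow_succ', Matrix.mul_apply]
    apply Finset.sum_eq_zero
    intro m _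
    by_cases hm : (m : ℕ) ≤ (i : ℕ) + 1
    · have : (A ^ k) m j = 0 := ih m j (by omega)
      simp [this]
    · have : A i m = 0 := hA2 i m (by omega)
      simp [this]

lemma pow_diag (hA1 : ∀ i j : Fin n, (j : ℕ) = (i : ℕ) + 1 → A i j ≠ 0)
    (hA2 : ∀ i j : Fin n, (i : ℕ) + 2 ≤ (j : ℕ) → A i j = 0) :
    ∀ k : ℕ, ∀ i j : Fin n, (j : ℕ) = (i : ℕ) + k → (A ^ k) i j ≠ 0 := by
  intro k
  induction k with
  | zero =>
    intro i j h
    have : i = j := Fin.ext (by omega)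
    subst this
    simp
  | succ k ih =>
    intro i j h
    have hi1 : (i : ℕ) + 1 < n := by
      have := j.isLt; omega
    set i' : Fin n := ⟨(i : ℕ) + 1, hi1⟩ with hi'
    rw [pow_succ', Matrix.mul_apply]
    rw [Finset.sum_eq_single i']
    · exact mul_ne_zero (hA1 i i' rfl) (ih i' j (by simp [hi']; omega))
    · intro m _ hm
      by_cases hle : (m : ℕ) ≤ (i : ℕ)
      · have : (A ^ k) m j = 0 := pow_band A hA2 k m j (by omega)
        simp [this]
      · have hge : (i : ℕ) + 2 ≤ (m : ℕ) := by
          rcases Nat.lt_or_ge (m : ℕ) ((i : ℕ) + 2) with h1 | h1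
          · exfalso; apply hm; apply Fin.ext; simp [hi']; omega
          · exact h1
        have : A i m = 0 := hA2 i m hge
        simp [this]
    · intro h; exact absurd (Finset.mem_univ i') h

lemma commutant_zero (hn : 0 < n)
    (hA1 : ∀ i j : Fin n, (j : ℕ) = (i : ℕ) + 1 → A i j ≠ 0)
    (hA2 : ∀ i j : Fin n, (i : ℕ) + 2 ≤ (j : ℕ) → A i j = 0)
    (Y : Matrix (Fin n) (Fin n) ℝ) (hcomm : A * Y = Y * A)
    (h0 : ∀ j, Y ⟨0, hn⟩ j = 0) : Y = 0 := by
  have H : ∀ t : ℕ, ∀ i : Fin n, (i : ℕ) ≤ t → ∀ j, Y i j = 0 := by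
    intro t
    induction t with
    | zero =>
      intro i hi j
      have : i = ⟨0, hn⟩ := by apply Fin.ext; simp only [Fin.val_mk]; omega
      rw [this]; exact h0 j
    | succ t ih =>
      intro i hi j
      by_cases ht : (i : ℕ) ≤ t
      · exact ih i ht j
      have hival : (i : ℕ) = t + 1 := by omega
      have htn : t < n := by have := i.isLt; omega
      set i' : Fin n := ⟨t, htn⟩ with hi'
      have hentry : (A * Y) i' j = (Y * A) i' j := by rw [hcomm]
      rw [Matrix.mul_apply, Matrix.mul_apply] at hentry
      have hrhs : (∑ m, Y i' m * A m j) = 0 := by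
        apply Finset.sum_eq_zero
        intro m _
        have : Y i' m = 0 := ih i' (by simp [hi']) m
        simp [this]
      have hlhs : (∑ m, A i' m * Y m j) = A i' i * Y i j := by
        rw [Finset.sum_eq_single i]
        · intro m _ hm
          by_cases hle : (m : ℕ) ≤ t
          · have : Y m j = 0 := ih m hle j
            simp [this]
          · have : A i' m = 0 := by
              apply hA2 i' m
              simp only [hi']
              rcases Nat.lt_or_ge (m : ℕ) (t + 2) with h1 | h1
              · exfalso; apply hm; apply Fin.ext; omega
              · omega
            simp [this]
        · intro h; exact absurd (Finset.mem_univ i) h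
      rw [hlhs, hrhs] at hentry
      have hne : A i' i ≠ 0 := hA1 i' i (by simp [hi']; omega)
      exact (mul_eq_zero.mp hentry).resolve_left hne
  ext i j
  simpa using H (i : ℕ) i le_rfl j

end Helpers


open Matrix

/-- `𝒜` is a proper lower Hessenberg pattern whose digraph has a `k`-cycle for each
`2 ≤ k ≤ n` (equivalently, at least one nonzero entry on each subdiagonal). -/
theorem stmt_7 {n : ℕ} (𝒜 : Matrix (Fin n) (Fin n) SignType)
    (hsuper : ∀ i j : Fin n, (j : ℕ) = (i : ℕ) + 1 → 𝒜 i j ≠ 0)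
    (hzero : ∀ i j : Fin n, (i : ℕ) + 2 ≤ (j : ℕ) → 𝒜 i j = 0)
    (hsub : ∀ k : ℕ, 1 ≤ k → k ≤ n - 1 →
      ∃ i j : Fin n, (i : ℕ) = (j : ℕ) + k ∧ 𝒜 i j ≠ 0) :
    RequiresNSMP 𝒜 := by
  intro A hA X hXhad hXcomm hXtr
  rcases Nat.eq_zero_or_pos n with hn0 | hn
  · subst hn0; ext i j; exact i.elim0
  have hAsign : ∀ i j, SignType.sign (A i j) = 𝒜 i j := hA
  have hA1 : ∀ i j : Fin n, (j : ℕ) = (i : ℕ) + 1 → A i j ≠ 0 := by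
    intro i j h hz
    exact hsuper i j h (by rw [← hAsign i j, hz, sign_zero])
  have hA2 : ∀ i j : Fin n, (i : ℕ) + 2 ≤ (j : ℕ) → A i j = 0 := by
    intro i j h
    have h1 := hAsign i j
    rw [hzero i j h] at h1
    exact sign_eq_zero_iff.mp h1
  have hAnz : ∀ i j : Fin n, 𝒜 i j ≠ 0 → A i j ≠ 0 := by
    intro i j h hz
    exact h (by rw [← hAsign i j, hz, sign_zero])
  set Y := Xᵀ with hYdef
  have hcomm : A * Y = Y * A := sub_eq_zero.mp hXcomm
  have hXzero : ∀ i j, A i j ≠ 0 → X i j = 0 := by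
    intro i j h
    have h1 := congrFun (congrFun hXhad i) j
    simp only [Matrix.hadamard_apply, Matrix.zero_apply] at h1
    exact (mul_eq_zero.mp h1).resolve_left h
  set i0 : Fin n := ⟨0, hn⟩ with hi0
  set M : Matrix (Fin n) (Fin n) ℝ := Matrix.of (fun k j : Fin n => (A ^ (k : ℕ)) i0 j)
    with hMdef
  have htri : M.BlockTriangular OrderDual.toDual := by
    intro i j hij
    have hij' : (i : ℕ) < (j : ℕ) := hij
    exact pow_band A hA2 (i : ℕ) i0 j (by simp [hi0]; omega)
  have hdiag : ∀ k : Fin n, M k k ≠ 0 := fun k =>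
    pow_diag A hA1 hA2 (k : ℕ) i0 k (by simp [hi0])
  have hdet : M.det ≠ 0 := by
    rw [Matrix.det_of_lowerTriangular M htri]
    exact Finset.prod_ne_zero_iff.mpr fun k _ => hdiag k
  have hMinv : M⁻¹ * M = 1 := Matrix.nonsing_inv_mul M (isUnit_iff_ne_zero.mpr hdet)
  set c : Fin n → ℝ := (fun j => Y i0 j) ᵥ* M⁻¹ with hcdef
  have hc : ∀ j, (∑ m, c m * M m j) = Y i0 j := by
    have h1 : c ᵥ* M = fun j => Y i0 j := by
      rw [hcdef, Matrix.vecMul_vecMul, hMinv, Matrix.vecMul_one]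
    intro j
    have h2 := congrFun h1 j
    simpa [Matrix.vecMul, dotProduct] using h2
  set P : Matrix (Fin n) (Fin n) ℝ := ∑ k : Fin n, c k • A ^ (k : ℕ) with hPdef
  have hPapply : ∀ i j, P i j = ∑ k : Fin n, c k * (A ^ (k : ℕ)) i j := by
    intro i j
    rw [hPdef]
    simp [Matrix.sum_apply]
  have hP0 : ∀ j, P i0 j = Y i0 j := by
    intro j
    rw [hPapply]
    exact hc j
  have hPcomm : A * P = P * A := by
    rw [hPdef, Matrix.mul_sum, Matrix.sum_mul]
    apply Finset.sum_congr rfl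
    intro k _
    rw [mul_smul_comm, smul_mul_assoc, ← pow_succ', pow_succ]
  have hYP : Y = P := by
    have hz := commutant_zero A hn hA1 hA2 (Y - P)
      (by rw [Matrix.mul_sub, Matrix.sub_mul, hcomm, hPcomm])
      (by intro j; rw [Matrix.sub_apply, ← hi0, hP0 j, sub_self])
    exact sub_eq_zero.mp hz
  have hcK : ∀ k : Fin n, 1 ≤ (k : ℕ) → c k = 0 := by
    suffices H : ∀ d : ℕ, ∀ k : Fin n, n - 1 - (k : ℕ) ≤ d → 1 ≤ (k : ℕ) → c k = 0 by
      intro k hk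
      exact H (n - 1 - (k : ℕ)) k le_rfl hk
    intro d
    induction d using Nat.strong_induction_on with
    | _ d ih =>
      intro k hkd hk1
      have hlarger : ∀ m : Fin n, (k : ℕ) < (m : ℕ) → c m = 0 := by
        intro m hm
        have hmn := m.isLt
        exact ih (n - 1 - (m : ℕ)) (by omega) m le_rfl (by omega)
      obtain ⟨i, j, hij, hnz⟩ := hsub (k : ℕ) hk1 (by have := k.isLt; omega)
      have hAij : A i j ≠ 0 := hAnz i j hnz
      have hYji : Y j i = 0 := by
        rw [hYdef, Matrix.transpose_apply]
        exact hXzero i j hAij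
      have hPji : (∑ m : Fin n, c m * (A ^ (m : ℕ)) j i) = 0 := by
        rw [← hPapply, ← hYP]
        exact hYji
      rw [Finset.sum_eq_single k] at hPji
      · have hpne : (A ^ (k : ℕ)) j i ≠ 0 := pow_diag A hA1 hA2 (k : ℕ) j i (by omega)
        exact (mul_eq_zero.mp hPji).resolve_right hpne
      · intro m _ hm
        rcases lt_trichotomy ((m : ℕ)) ((k : ℕ)) with h | h | h
        · have hz : (A ^ (m : ℕ)) j i = 0 := pow_band A hA2 (m : ℕ) j i (by omega)
          simp [hz]
        · exact absurd (Fin.ext h) hm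
        · simp [hlarger m h]
      · intro h; exact absurd (Finset.mem_univ k) h
  have hc0 : ∀ k : Fin n, c k = 0 := by
    intro k
    rcases Nat.eq_zero_or_pos (k : ℕ) with hk | hk
    · have htr0 : Y.trace = 0 := by
        have h1 := hXtr 0 hn
        rwa [pow_zero, mul_one] at h1
      have htrY : Y.trace = c k * (n : ℝ) := by
        have h1 : Y.trace = ∑ j : Fin n, ∑ m : Fin n, c m * (A ^ (m : ℕ)) j j := by
          rw [Matrix.trace]
          apply Finset.sum_congr rfl
          intro j _
          rw [Matrix.diag_apply, hYP, hPapply]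
        rw [h1, Finset.sum_comm, Finset.sum_eq_single k]
        · have hk0 : (k : ℕ) = 0 := hk
          rw [hk0]
          simp [Matrix.one_apply_eq, Finset.sum_const, Finset.card_univ, nsmul_eq_mul]
          ring
        · intro m _ hm
          have hm1 : 1 ≤ (m : ℕ) := by
            have : (m : ℕ) ≠ (k : ℕ) := fun h => hm (Fin.ext h)
            omega
          simp [hcK m hm1]
        · intro h; exact absurd (Finset.mem_univ k) h
      have hn' : (n : ℝ) ≠ 0 := Nat.cast_ne_zero.mpr (by omega)
      have := htrY.symm.trans htr0
      exact (mul_eq_zero.mp this).resolve_right hn'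
    · exact hcK k hk
  have hYzero : Y = 0 := by
    rw [hYP, hPdef]
    apply Finset.sum_eq_zero
    intro k _
    rw [hc0 k, zero_smul]
  exact Matrix.transpose_eq_zero.mp hYzero
end

section
/- An n×n star sign pattern 𝒜 does not allow the nSMP if and only if the number of non-centre vertices j (2 ≤ j ≤ n) with 𝒜_{jj} ≠ 0 is strictly less than n−3. -/
open Matrix

lemma card_split {n : ℕ} [NeZero n] (𝒜 : Matrix (Fin n) (Fin n) SignType) :
    (Finset.univ.filter (fun j : Fin n => j ≠ 0 ∧ 𝒜 j j = 0)).card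
    + (Finset.univ.filter (fun j : Fin n => j ≠ 0 ∧ 𝒜 j j ≠ 0)).card = n - 1 := by
  classical
  rw [← Finset.card_union_of_disjoint (by simp [Finset.disjoint_left]; tauto)]
  have : (Finset.univ.filter (fun j : Fin n => j ≠ 0 ∧ 𝒜 j j = 0))
      ∪ (Finset.univ.filter (fun j : Fin n => j ≠ 0 ∧ 𝒜 j j ≠ 0))
      = Finset.univ.filter (fun j : Fin n => j ≠ 0) := by
    ext x; simp; tauto
  rw [this, Finset.filter_ne', Finset.card_erase_of_mem (Finset.mem_univ _)]
  simp

lemma easy_dir {n : ℕ} [NeZero n] (𝒜 : Matrix (Fin n) (Fin n) SignType)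
    (hstar : IsStarPattern 𝒜)
    (h : (Finset.univ.filter (fun j : Fin n => j ≠ 0 ∧ 𝒜 j j ≠ 0)).card < n - 3) :
    ¬ AllowsNSMP 𝒜 := by
  classical
  rintro ⟨A, hAQ, hnsmp⟩
  -- zero entries of A
  have hz : ∀ i j, 𝒜 i j = 0 → A i j = 0 := by
    intro i j hij
    have := hAQ i j
    rw [hij] at this
    exact sign_eq_zero_iff.mp this
  have hnz : ∀ i j, 𝒜 i j ≠ 0 → A i j ≠ 0 := by
    intro i j hij hA
    exact hij (by rw [← hAQ i j, hA, sign_zero])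
  set S : Finset (Fin n) := Finset.univ.filter (fun j : Fin n => j ≠ 0 ∧ 𝒜 j j = 0) with hS
  have hcard : 3 ≤ S.card := by
    have h2 := card_split 𝒜
    rw [← hS] at h2
    omega
  obtain ⟨T, hTsub, hT3⟩ := Finset.exists_subset_card_eq hcard
  obtain ⟨s, t, r, hst, hsr, htr, hTeq⟩ := Finset.card_eq_three.mp hT3
  have hsS : s ∈ S := hTsub (by simp [hTeq])
  have htS : t ∈ S := hTsub (by simp [hTeq])
  have hrS : r ∈ S := hTsub (by simp [hTeq])
  have hmem : ∀ x ∈ S, x ≠ 0 ∧ 𝒜 x x = 0 := by intro x hx; simpa [hS] using hx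
  obtain ⟨hs0, hsd⟩ := hmem s hsS
  obtain ⟨ht0, htd⟩ := hmem t htS
  obtain ⟨hr0, hrd⟩ := hmem r hrS
  -- A vanishes on rows/cols of S (off centre)
  have hAS : ∀ x ∈ S, ∀ j, j ≠ 0 → A x j = 0 := by
    intro x hx j hj
    obtain ⟨hx0, hxd⟩ := hmem x hx
    by_cases hxj : x = j
    · subst hxj; exact hz _ _ hxd
    · exact hz _ _ (hstar.2 x j hx0 hj hxj)
  have hAS' : ∀ x ∈ S, ∀ i, i ≠ 0 → A i x = 0 := by
    intro x hx i hi
    obtain ⟨hx0, hxd⟩ := hmem x hx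
    by_cases hxi : i = x
    · subst hxi; exact hz _ _ hxd
    · exact hz _ _ (hstar.2 i x hi hx0 hxi)
  have hbs : A 0 s ≠ 0 := hnz _ _ (hstar.1 s hs0).1
  have hbt : A 0 t ≠ 0 := hnz _ _ (hstar.1 t ht0).1
  have hcr : A r 0 ≠ 0 := hnz _ _ (hstar.1 r hr0).2
  -- the vectors
  set u : Fin n → ℝ := fun k => if k = s then A 0 t else if k = t then -(A 0 s) else 0 with hu
  set v : Fin n → ℝ := fun k => if k = s then A 0 s else if k = t then A 0 t
      else if k = r then -(A s 0 * A 0 s + A t 0 * A 0 t)/(A r 0) else 0 with hv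
  set X : Matrix (Fin n) (Fin n) ℝ := Matrix.vecMulVec v u with hX
  have hus : u s = A 0 t := by simp [hu]
  have hut : u t = -(A 0 s) := by simp [hu, hst.symm]
  have hvs : v s = A 0 s := by simp [hv]
  have hvt : v t = A 0 t := by simp [hv, hst.symm]
  have hvr : v r = -(A s 0 * A 0 s + A t 0 * A 0 t)/(A r 0) := by simp [hv, hsr.symm, htr.symm]
  have husupp : ∀ k, u k ≠ 0 → k = s ∨ k = t := by
    intro k hk; by_contra hc; push_neg at hc
    simp [hu, hc.1, hc.2] at hk
  have hvsupp : ∀ k, v k ≠ 0 → k = s ∨ k = t ∨ k = r := by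
    intro k hk; by_contra hc; push_neg at hc
    simp [hv, hc.1, hc.2.1, hc.2.2] at hk
  have hvS : ∀ k, v k ≠ 0 → k ∈ S := by
    intro k hk; rcases hvsupp k hk with h|h|h <;> subst h <;> assumption
  have huS : ∀ k, u k ≠ 0 → k ∈ S := by
    intro k hk; rcases husupp k hk with h|h <;> subst h <;> assumption
  -- A *ᵥ u = 0 rows: ∀ i, ∑ k, A i k * u k = 0
  have hAu : ∀ i, ∑ k, A i k * u k = 0 := by
    intro i
    have hred : ∑ k, A i k * u k = ∑ k ∈ ({s, t} : Finset (Fin n)), A i k * u k := by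
      refine (Finset.sum_subset (Finset.subset_univ _) ?_).symm
      intro x _ hx
      simp only [Finset.mem_insert, Finset.mem_singleton] at hx
      push_neg at hx
      simp [hu, hx.1, hx.2]
    rw [hred, Finset.sum_pair hst, hus, hut]
    by_cases hi : i = 0
    · subst hi; ring
    · rw [hAS' s hsS i hi, hAS' t htS i hi]; ring
  have hvA : ∀ j, ∑ k, v k * A k j = 0 := by
    intro j
    have hred : ∑ k, v k * A k j = ∑ k ∈ ({s, t, r} : Finset (Fin n)), v k * A k j := by
      refine (Finset.sum_subset (Finset.subset_univ _) ?_).symm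
      intro x _ hx
      simp only [Finset.mem_insert, Finset.mem_singleton] at hx
      push_neg at hx
      simp [hv, hx.1, hx.2.1, hx.2.2]
    rw [hred, Finset.sum_insert (by simp [hst, hsr]), Finset.sum_pair htr, hvs, hvt, hvr]
    by_cases hj : j = 0
    · subst hj; field_simp; ring
    · rw [hAS s hsS j hj, hAS t htS j hj, hAS r hrS j hj]; ring
  -- hadamard condition
  have hHad : A.hadamard X = 0 := by
    ext i j
    simp only [Matrix.hadamard_apply, hX, Matrix.vecMulVec_apply, Matrix.zero_apply]
    by_cases hvi : v i = 0
    · rw [hvi]; ring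
    · by_cases huj : u j = 0
      · rw [huj]; ring
      · have hiS := hvS i hvi
        have hjS := huS j huj
        obtain ⟨hi0, hid⟩ := hmem i hiS
        obtain ⟨hj0, _⟩ := hmem j hjS
        rw [hAS i hiS j hj0]; ring
  -- commutator condition
  have hComm : A * Xᵀ - Xᵀ * A = 0 := by
    have h1 : A * Xᵀ = 0 := by
      ext i j
      simp only [Matrix.mul_apply, hX, Matrix.transpose_apply, Matrix.vecMulVec_apply,
        Matrix.zero_apply]
      calc ∑ k, A i k * (v j * u k) = v j * ∑ k, A i k * u k := by
            rw [Finset.mul_sum]; apply Finset.sum_congr rfl; intros; ring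
        _ = 0 := by rw [hAu]; ring
    have h2 : Xᵀ * A = 0 := by
      ext i j
      simp only [Matrix.mul_apply, hX, Matrix.transpose_apply, Matrix.vecMulVec_apply,
        Matrix.zero_apply]
      calc ∑ k, v k * u i * A k j = u i * ∑ k, v k * A k j := by
            rw [Finset.mul_sum]; apply Finset.sum_congr rfl; intros; ring
        _ = 0 := by rw [hvA]; ring
    rw [h1, h2, sub_zero]
  -- trace conditions
  have hTr : ∀ k : ℕ, k < n → (Xᵀ * A ^ k).trace = 0 := by
    intro k _
    have hvAk : ∀ m : ℕ, 1 ≤ m → ∀ j, ∑ l, v l * (A ^ m) l j = 0 := by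
      intro m hm
      induction m with
      | zero => omega
      | succ p ih =>
        by_cases hp : p = 0
        · subst hp; intro j; simpa using hvA j
        · intro j
          have hp1 : 1 ≤ p := by omega
          have : (A ^ (p + 1)) = A ^ p * A := pow_succ A p
          rw [this]
          calc ∑ l, v l * (A ^ p * A) l j
              = ∑ l, ∑ m', v l * ((A ^ p) l m' * A m' j) := by
                apply Finset.sum_congr rfl; intros l _
                rw [Matrix.mul_apply, Finset.mul_sum]
            _ = ∑ m', ∑ l, v l * ((A ^ p) l m' * A m' j) := Finset.sum_comm
            _ = ∑ m', (∑ l, v l * (A ^ p) l m') * A m' j := by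
                apply Finset.sum_congr rfl; intros m' _
                rw [Finset.sum_mul]; apply Finset.sum_congr rfl; intros; ring
            _ = 0 := by
                apply Finset.sum_eq_zero; intro m' _
                rw [ih hp1 m']; ring
    have htr_eq : (Xᵀ * A ^ k).trace = ∑ i, ∑ l, (v l * u i) * (A ^ k) l i := by
      simp only [Matrix.trace, Matrix.diag, Matrix.mul_apply, hX, Matrix.transpose_apply,
        Matrix.vecMulVec_apply]
    rw [htr_eq]
    by_cases hk : k = 0
    · subst hk
      have hred : ∀ i : Fin n, ∑ l, v l * u i * (A ^ 0) l i = v i * u i := by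
        intro i
        rw [Finset.sum_eq_single i]
        · simp
        · intro b _ hb; simp [Matrix.one_apply_ne hb]
        · simp
      calc ∑ i, ∑ l, v l * u i * (A ^ 0) l i = ∑ i, v i * u i := by
            apply Finset.sum_congr rfl; intros i _; exact hred i
        _ = ∑ i ∈ ({s, t} : Finset (Fin n)), v i * u i := by
            refine (Finset.sum_subset (Finset.subset_univ _) ?_).symm
            intro x _ hx
            simp only [Finset.mem_insert, Finset.mem_singleton] at hx
            push_neg at hx
            simp [hu, hx.1, hx.2]
        _ = 0 := by rw [Finset.sum_pair hst, hus, hut, hvs, hvt]; ring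
    · have hk1 : 1 ≤ k := by omega
      apply Finset.sum_eq_zero; intro i _
      calc ∑ l, v l * u i * (A ^ k) l i = u i * ∑ l, v l * (A ^ k) l i := by
            rw [Finset.mul_sum]; apply Finset.sum_congr rfl; intros; ring
        _ = 0 := by rw [hvAk k hk1 i]; ring
  have hX0 := hnsmp X hHad hComm hTr
  have : X s t ≠ 0 := by
    rw [hX]
    simp only [Matrix.vecMulVec_apply]
    rw [hvs, hut]
    intro hc
    rcases mul_eq_zero.mp hc with h'|h'
    · exact hbs h'
    · exact hbs (neg_eq_zero.mp h')
  rw [hX0] at this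
  exact this rfl

noncomputable def starMat {n : ℕ} [NeZero n] (𝒜 : Matrix (Fin n) (Fin n) SignType) :
    Matrix (Fin n) (Fin n) ℝ :=
  fun i j => (𝒜 i j : ℝ) * (if i = 0 then (2:ℝ) ^ (j : ℕ) else if i = j then ((i : ℕ) : ℝ) + 1 else 1)

lemma starMat_weight_pos {n : ℕ} [NeZero n] (i j : Fin n) :
    (0:ℝ) < (if i = 0 then (2:ℝ) ^ (j : ℕ) else if i = j then ((i : ℕ) : ℝ) + 1 else 1) := by
  split_ifs <;> positivity

lemma sign_coe_mul_pos (s : SignType) (p : ℝ) (hp : 0 < p) :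
    SignType.sign ((s : ℝ) * p) = s := by
  cases s with
  | zero => simp
  | neg =>
    rw [show ((SignType.neg : SignType) : ℝ) = -1 by simp]
    rw [sign_neg (by nlinarith)]; rfl
  | pos =>
    rw [show ((SignType.pos : SignType) : ℝ) = 1 by simp]
    rw [one_mul, sign_pos hp]; rfl

lemma starMat_sign {n : ℕ} [NeZero n] (𝒜 : Matrix (Fin n) (Fin n) SignType) (i j : Fin n) :
    SignType.sign (starMat 𝒜 i j) = 𝒜 i j :=
  sign_coe_mul_pos _ _ (starMat_weight_pos i j)

lemma starMat_zero {n : ℕ} [NeZero n] (𝒜 : Matrix (Fin n) (Fin n) SignType) (i j : Fin n)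
    (h : 𝒜 i j = 0) : starMat 𝒜 i j = 0 := by
  simp [starMat, h]

lemma starMat_ne_zero {n : ℕ} [NeZero n] (𝒜 : Matrix (Fin n) (Fin n) SignType) (i j : Fin n)
    (h : 𝒜 i j ≠ 0) : starMat 𝒜 i j ≠ 0 := by
  intro hc
  apply h
  rw [← starMat_sign 𝒜 i j, hc, sign_zero]

lemma starMat_diag_ne {n : ℕ} [NeZero n] (𝒜 : Matrix (Fin n) (Fin n) SignType) (i j : Fin n)
    (hi : i ≠ 0) (hj : j ≠ 0) (hij : i ≠ j) (h : 𝒜 i i ≠ 0 ∨ 𝒜 j j ≠ 0) :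
    starMat 𝒜 i i ≠ starMat 𝒜 j j := by
  have hcast : (i : ℕ) ≠ (j : ℕ) := fun hc => hij (Fin.ext hc)
  have hi0 : (0:ℝ) ≤ (i:ℕ) := Nat.cast_nonneg _
  have hj0 : (0:ℝ) ≤ (j:ℕ) := Nat.cast_nonneg _
  have hijR : ((i:ℕ):ℝ) ≠ ((j:ℕ):ℝ) := by exact_mod_cast hcast
  simp only [starMat, if_neg hi, if_neg hj, if_pos rfl]
  intro hc
  rcases h with h | h <;>
  · cases hii : 𝒜 i i <;> cases hjj : 𝒜 j j <;>
      rw [hii, hjj] at hc <;>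
      simp_all <;> nlinarith

lemma starMat_bc {n : ℕ} [NeZero n] (𝒜 : Matrix (Fin n) (Fin n) SignType) (s : Fin n)
    (hs : s ≠ 0) (h1 : 𝒜 0 s ≠ 0) (h2 : 𝒜 s 0 ≠ 0) :
    starMat 𝒜 0 s * starMat 𝒜 s 0 = (2:ℝ) ^ (s:ℕ) ∨
    starMat 𝒜 0 s * starMat 𝒜 s 0 = -((2:ℝ) ^ (s:ℕ)) := by
  have hA1 : starMat 𝒜 0 s = (𝒜 0 s : ℝ) * (2:ℝ) ^ (s:ℕ) := by simp [starMat]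
  have hA2 : starMat 𝒜 s 0 = (𝒜 s 0 : ℝ) := by
    simp [starMat, if_neg hs]
  rw [hA1, hA2]
  cases hx : 𝒜 0 s <;> cases hy : 𝒜 s 0 <;> simp_all <;> ring_nf <;> simp

lemma starMat_beta_ne {n : ℕ} [NeZero n] (𝒜 : Matrix (Fin n) (Fin n) SignType) (s t : Fin n)
    (hs : s ≠ 0) (ht : t ≠ 0) (hst : s ≠ t)
    (h1s : 𝒜 0 s ≠ 0) (h2s : 𝒜 s 0 ≠ 0) (h1t : 𝒜 0 t ≠ 0) (h2t : 𝒜 t 0 ≠ 0) :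
    starMat 𝒜 0 s * starMat 𝒜 s 0 + starMat 𝒜 0 t * starMat 𝒜 t 0 ≠ 0 := by
  have hne : (2:ℝ) ^ (s:ℕ) ≠ (2:ℝ) ^ (t:ℕ) := by
    intro hc
    have h2 : (2:ℕ) ^ (s:ℕ) = 2 ^ (t:ℕ) := by exact_mod_cast hc
    exact hst (Fin.ext (Nat.pow_right_injective (le_refl 2) h2))
  have hps : (0:ℝ) < (2:ℝ) ^ (s:ℕ) := by positivity
  have hpt : (0:ℝ) < (2:ℝ) ^ (t:ℕ) := by positivity
  rcases starMat_bc 𝒜 s hs h1s h2s with hbs | hbs <;>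
    rcases starMat_bc 𝒜 t ht h1t h2t with hbt | hbt <;>
      rw [hbs, hbt] <;> intro hc <;> [linarith; (apply hne; linarith); (apply hne; linarith); linarith]

lemma hard_dir {n : ℕ} [NeZero n] (hn : 2 ≤ n) (𝒜 : Matrix (Fin n) (Fin n) SignType)
    (hstar : IsStarPattern 𝒜)
    (h : n - 3 ≤ (Finset.univ.filter (fun j : Fin n => j ≠ 0 ∧ 𝒜 j j ≠ 0)).card) :
    AllowsNSMP 𝒜 := by
  classical
  set A : Matrix (Fin n) (Fin n) ℝ := starMat 𝒜 with hA
  refine ⟨A, fun i j => starMat_sign 𝒜 i j, ?_⟩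
  intro X h1 h2 h3
  have hz : ∀ i j, 𝒜 i j ≠ 0 → X i j = 0 := by
    intro i j hij
    have hh := congrFun (congrFun h1 i) j
    rw [Matrix.hadamard_apply] at hh
    rcases mul_eq_zero.mp hh with h' | h'
    · exact absurd h' (starMat_ne_zero _ _ _ hij)
    · exact h'
  have hX0j : ∀ j : Fin n, j ≠ 0 → X 0 j = 0 := fun j hj => hz 0 j (hstar.1 j hj).1
  have hXj0 : ∀ j : Fin n, j ≠ 0 → X j 0 = 0 := fun j hj => hz j 0 (hstar.1 j hj).2
  rw [sub_eq_zero] at h2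
  have hE : ∀ i j, ∑ k, A i k * X j k = ∑ k, X k i * A k j := by
    intro i j
    have hh := congrFun (congrFun h2 i) j
    simpa [Matrix.mul_apply] using hh
  have hkill : ∀ i j : Fin n, i ≠ 0 → j ≠ 0 → i ≠ j → (𝒜 i i ≠ 0 ∨ 𝒜 j j ≠ 0) → X j i = 0 := by
    intro i j hi hj hij hd
    have hEij := hE i j
    have hL : ∑ k, A i k * X j k = A i i * X j i := by
      rw [Finset.sum_eq_single i]
      · intro b _ hb
        by_cases hb0 : b = 0
        · subst hb0; rw [hXj0 j hj]; ring
        · rw [hA, starMat_zero 𝒜 i b (hstar.2 i b hi hb0 (fun hc => hb hc.symm))]; ring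
      · intro hc; exact absurd (Finset.mem_univ i) hc
    have hR : ∑ k, X k i * A k j = X j i * A j j := by
      rw [Finset.sum_eq_single j]
      · intro b _ hb
        by_cases hb0 : b = 0
        · subst hb0; rw [hX0j i hi]; ring
        · rw [hA, starMat_zero 𝒜 b j (hstar.2 b j hb0 hj hb)]; ring
      · intro hc; exact absurd (Finset.mem_univ j) hc
    rw [hL, hR] at hEij
    have hne : A i i ≠ A j j := starMat_diag_ne 𝒜 i j hi hj hij hd
    have : (A i i - A j j) * X j i = 0 := by linear_combination hEij
    rcases mul_eq_zero.mp this with h' | h'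
    · exact absurd (sub_eq_zero.mp h') hne
    · exact h'
  set S : Finset (Fin n) := Finset.univ.filter (fun j : Fin n => j ≠ 0 ∧ 𝒜 j j = 0) with hS
  have hmemS : ∀ x : Fin n, x ∈ S ↔ (x ≠ 0 ∧ 𝒜 x x = 0) := by intro x; simp [hS]
  have hsupp : ∀ i j : Fin n, (i ∉ S ∨ j ∉ S) → ¬(i = 0 ∧ j = 0) → X i j = 0 := by
    intro i j hor hne
    by_cases hi : i = 0
    · subst hi
      exact hX0j j (fun hc => hne ⟨rfl, hc⟩)
    · by_cases hj : j = 0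
      · subst hj; exact hXj0 i hi
      · have hdiag : ∀ x : Fin n, x ≠ 0 → x ∉ S → 𝒜 x x ≠ 0 := by
          intro x hx0 hxS hc
          exact hxS ((hmemS x).mpr ⟨hx0, hc⟩)
        by_cases hij : i = j
        · subst hij
          rcases hor with h' | h' <;> exact hz i i (hdiag i hi h')
        · refine hkill j i hj hi (fun hc => hij hc.symm) ?_
          rcases hor with h' | h'
          · exact Or.inr (hdiag i hi h')
          · exact Or.inl (hdiag j hj h')
  -- the trace-0 condition
  have ht0 := h3 0 (by omega)
  rw [pow_zero, mul_one, Matrix.trace_transpose] at ht0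
  have htr0 : ∑ i, X i i = 0 := by
    simpa [Matrix.trace, Matrix.diag] using ht0
  -- S is small
  have hcardsplit : S.card + (Finset.univ.filter (fun j : Fin n => j ≠ 0 ∧ 𝒜 j j ≠ 0)).card
      = n - 1 := by
    rw [hS, ← Finset.card_union_of_disjoint (by simp [Finset.disjoint_left]; tauto)]
    have huni : (Finset.univ.filter (fun j : Fin n => j ≠ 0 ∧ 𝒜 j j = 0))
        ∪ (Finset.univ.filter (fun j : Fin n => j ≠ 0 ∧ 𝒜 j j ≠ 0))
        = Finset.univ.filter (fun j : Fin n => j ≠ 0) := by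
      ext x; simp; tauto
    rw [huni, Finset.filter_ne', Finset.card_erase_of_mem (Finset.mem_univ _)]
    simp
  have hcS : S.card = 0 ∨ S.card = 1 ∨ S.card = 2 := by omega
  rcases hcS with hcS | hcS | hcS
  · -- no loopless vertices
    have hSempty : S = ∅ := Finset.card_eq_zero.mp hcS
    have hX00 : X 0 0 = 0 := by
      rw [← htr0]
      symm
      rw [Finset.sum_eq_single (0 : Fin n)]
      · intro b _ hb
        exact hsupp b b (Or.inl (by simp [hSempty])) (fun hc => hb hc.1)
      · intro hc; exact absurd (Finset.mem_univ 0) hc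
    ext i j
    rw [Matrix.zero_apply]
    by_cases hij : i = 0 ∧ j = 0
    · rw [hij.1, hij.2]; exact hX00
    · exact hsupp i j (Or.inl (by simp [hSempty])) hij
  · -- exactly one loopless vertex s
    obtain ⟨s, hSeq⟩ := Finset.card_eq_one.mp hcS
    have hsS : s ∈ S := by rw [hSeq]; exact Finset.mem_singleton_self s
    obtain ⟨hs0, hsd⟩ := (hmemS s).mp hsS
    have hbs : A 0 s ≠ 0 := starMat_ne_zero 𝒜 0 s (hstar.1 s hs0).1
    -- the key equation from hE 0 s
    have hEe := hE 0 s
    have hL : ∑ k, A 0 k * X s k = A 0 s * X s s := by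
      rw [Finset.sum_eq_single s]
      · intro b _ hb
        by_cases hb0 : b = 0
        · subst hb0; rw [hXj0 s hs0]; ring
        · have : X s b = 0 := by
            refine hsupp s b (Or.inr ?_) (fun hc => hs0 hc.1)
            rw [hSeq]; simp [hb]
          rw [this]; ring
      · intro hc; exact absurd (Finset.mem_univ s) hc
    have hR : ∑ k, X k 0 * A k s = X 0 0 * A 0 s := by
      rw [Finset.sum_eq_single (0 : Fin n)]
      · intro b _ hb
        rw [hXj0 b hb]; ring
      · intro hc; exact absurd (Finset.mem_univ 0) hc
    rw [hL, hR] at hEe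
    have hXss : X s s = X 0 0 := by
      have : A 0 s * (X s s - X 0 0) = 0 := by linear_combination hEe
      rcases mul_eq_zero.mp this with h' | h'
      · exact absurd h' hbs
      · linarith [sub_eq_zero.mp h']
    have htr0' : X 0 0 + X s s = 0 := by
      rw [← htr0]
      symm
      have hred : ∑ i, X i i = ∑ i ∈ ({0, s} : Finset (Fin n)), X i i := by
        refine (Finset.sum_subset (Finset.subset_univ _) ?_).symm
        intro x _ hx
        simp only [Finset.mem_insert, Finset.mem_singleton] at hx
        push_neg at hx
        refine hsupp x x (Or.inl ?_) (fun hc => hx.1 hc.1)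
        rw [hSeq]; simp [hx.2]
      rw [hred, Finset.sum_pair (fun hc => hs0 hc.symm)]
    have hX00 : X 0 0 = 0 := by linarith
    have hXss0 : X s s = 0 := by linarith
    ext i j
    rw [Matrix.zero_apply]
    by_cases hij0 : i = 0 ∧ j = 0
    · rw [hij0.1, hij0.2]; exact hX00
    · by_cases hijs : i = s ∧ j = s
      · rw [hijs.1, hijs.2]; exact hXss0
      · refine hsupp i j ?_ hij0
        by_cases his : i = s
        · subst his
          refine Or.inr ?_
          rw [hSeq]
          simp only [Finset.mem_singleton]
          exact fun hc => hijs ⟨rfl, hc⟩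
        · refine Or.inl ?_
          rw [hSeq]; simp [his]
  · -- exactly two loopless vertices s, t
    obtain ⟨s, t, hst, hSeq⟩ := Finset.card_eq_two.mp hcS
    have hsS : s ∈ S := by rw [hSeq]; simp
    have htS : t ∈ S := by rw [hSeq]; simp
    obtain ⟨hs0, hsd⟩ := (hmemS s).mp hsS
    obtain ⟨ht0, htd⟩ := (hmemS t).mp htS
    have hnotS : ∀ x : Fin n, x ≠ s → x ≠ t → x ∉ S := by
      intro x h1x h2x
      rw [hSeq]; simp [h1x, h2x]
    have hbs : A 0 s ≠ 0 := starMat_ne_zero 𝒜 0 s (hstar.1 s hs0).1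
    have hbt : A 0 t ≠ 0 := starMat_ne_zero 𝒜 0 t (hstar.1 t ht0).1
    have hcs : A s 0 ≠ 0 := starMat_ne_zero 𝒜 s 0 (hstar.1 s hs0).2
    have hct : A t 0 ≠ 0 := starMat_ne_zero 𝒜 t 0 (hstar.1 t ht0).2
    have hβ : A 0 s * A s 0 + A 0 t * A t 0 ≠ 0 :=
      starMat_beta_ne 𝒜 s t hs0 ht0 hst (hstar.1 s hs0).1 (hstar.1 s hs0).2
        (hstar.1 t ht0).1 (hstar.1 t ht0).2
    have hAss : A s s = 0 := starMat_zero 𝒜 s s hsd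
    have hAtt : A t t = 0 := starMat_zero 𝒜 t t htd
    have hAst : A s t = 0 := starMat_zero 𝒜 s t (hstar.2 s t hs0 ht0 hst)
    have hAts : A t s = 0 := starMat_zero 𝒜 t s (hstar.2 t s ht0 hs0 hst.symm)
    -- row-zero equations
    have hrow : ∀ x : Fin n, x ∈ S →
        A 0 s * X x s + A 0 t * X x t = X 0 0 * A 0 x := by
      intro x hxS
      obtain ⟨hx0, _⟩ := (hmemS x).mp hxS
      have hEe := hE 0 x
      have hL : ∑ k, A 0 k * X x k = ∑ k ∈ ({s, t} : Finset (Fin n)), A 0 k * X x k := by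
        refine (Finset.sum_subset (Finset.subset_univ _) ?_).symm
        intro y _ hy
        simp only [Finset.mem_insert, Finset.mem_singleton] at hy
        push_neg at hy
        by_cases hy0 : y = 0
        · subst hy0; rw [hXj0 x hx0]; ring
        · rw [hsupp x y (Or.inr (hnotS y hy.1 hy.2)) (fun hc => hx0 hc.1)]; ring
      have hR : ∑ k, X k 0 * A k x = X 0 0 * A 0 x := by
        rw [Finset.sum_eq_single (0 : Fin n)]
        · intro b _ hb
          rw [hXj0 b hb]; ring
        · intro hc; exact absurd (Finset.mem_univ 0) hc
      rw [hL, Finset.sum_pair hst, hR] at hEe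
      convert hEe using 2
    have he1 := hrow s hsS
    have he2 := hrow t htS
    -- column-zero equations
    have hcol : ∀ x : Fin n, x ∈ S →
        A x 0 * X 0 0 = X s x * A s 0 + X t x * A t 0 := by
      intro x hxS
      obtain ⟨hx0, _⟩ := (hmemS x).mp hxS
      have hEe := hE x 0
      have hL : ∑ k, A x k * X 0 k = A x 0 * X 0 0 := by
        rw [Finset.sum_eq_single (0 : Fin n)]
        · intro b _ hb
          rw [hX0j b hb]; ring
        · intro hc; exact absurd (Finset.mem_univ 0) hc
      have hR : ∑ k, X k x * A k 0 = ∑ k ∈ ({s, t} : Finset (Fin n)), X k x * A k 0 := by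
        refine (Finset.sum_subset (Finset.subset_univ _) ?_).symm
        intro y _ hy
        simp only [Finset.mem_insert, Finset.mem_singleton] at hy
        push_neg at hy
        by_cases hy0 : y = 0
        · subst hy0; rw [hX0j x hx0]; ring
        · rw [hsupp y x (Or.inl (hnotS y hy.1 hy.2)) (fun hc => hy0 hc.1)]; ring
      rw [hL, hR, Finset.sum_pair hst] at hEe
      exact hEe
    have he3 := hcol s hsS
    have he4 := hcol t htS
    -- trace-zero equation
    have h0st : (0 : Fin n) ∉ ({s, t} : Finset (Fin n)) := by
      simp [Ne.symm hs0, Ne.symm ht0]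
    have he5 : X 0 0 + (X s s + X t t) = 0 := by
      rw [← htr0]
      symm
      have hred : ∑ i, X i i = ∑ i ∈ ({0, s, t} : Finset (Fin n)), X i i := by
        refine (Finset.sum_subset (Finset.subset_univ _) ?_).symm
        intro x _ hx
        simp only [Finset.mem_insert, Finset.mem_singleton] at hx
        push_neg at hx
        exact hsupp x x (Or.inl (hnotS x hx.2.1 hx.2.2)) (fun hc => hx.1 hc.1)
      rw [hred, Finset.sum_insert h0st, Finset.sum_pair hst]
    -- X 0 0 = 0
    have hX00 : X 0 0 = 0 := by
      by_cases h00 : 𝒜 0 0 ≠ 0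
      · exact hz 0 0 h00
      · by_cases hLoop : ∃ j : Fin n, j ≠ 0 ∧ 𝒜 j j ≠ 0
        · obtain ⟨j, hj0, hjd⟩ := hLoop
          have hjS : j ∉ S := fun hc => hjd ((hmemS j).mp hc).2
          have hEe := hE 0 j
          have hL : ∑ k, A 0 k * X j k = 0 := by
            apply Finset.sum_eq_zero
            intro k _
            by_cases hk0 : k = 0
            · subst hk0; rw [hXj0 j hj0]; ring
            · rw [hsupp j k (Or.inl hjS) (fun hc => hj0 hc.1)]; ring
          have hR : ∑ k, X k 0 * A k j = X 0 0 * A 0 j := by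
            rw [Finset.sum_eq_single (0 : Fin n)]
            · intro b _ hb
              rw [hXj0 b hb]; ring
            · intro hc; exact absurd (Finset.mem_univ 0) hc
          rw [hL, hR] at hEe
          have hbj : A 0 j ≠ 0 := starMat_ne_zero 𝒜 0 j (hstar.1 j hj0).1
          rcases mul_eq_zero.mp hEe.symm with h' | h'
          · exact h'
          · exact absurd h' hbj
        · -- no loops at all and no loop at the centre : n = 3
          push_neg at hLoop
          push_neg at h00
          have hA00 : A 0 0 = 0 := starMat_zero 𝒜 0 0 h00
          have huniv : (Finset.univ : Finset (Fin n)) = {0, s, t} := by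
            ext x
            simp only [Finset.mem_univ, Finset.mem_insert, Finset.mem_singleton, true_iff]
            by_cases hx : x = 0
            · exact Or.inl hx
            · have hxS : x ∈ S := (hmemS x).mpr ⟨hx, hLoop x hx⟩
              rw [hSeq] at hxS
              simp only [Finset.mem_insert, Finset.mem_singleton] at hxS
              exact Or.inr hxS
          have hn3 : 2 < n := by
            have hc3 : ({0, s, t} : Finset (Fin n)).card = 3 := by
              rw [Finset.card_insert_of_notMem h0st, Finset.card_pair hst]
            have := Finset.card_le_univ ({0, s, t} : Finset (Fin n))
            rw [hc3, Fintype.card_fin] at this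
            omega
          have htr2 := h3 2 hn3
          have htr2' : ∑ i, ∑ k, X k i * (A ^ 2) k i = 0 := by
            rw [← htr2]
            simp [Matrix.trace, Matrix.diag, Matrix.mul_apply]
          have hApow : ∀ a b : Fin n, (A ^ 2) a b = ∑ l, A a l * A l b := by
            intro a b
            rw [pow_two, Matrix.mul_apply]
          simp only [hApow] at htr2'
          rw [huniv] at htr2'
          simp only [Finset.sum_insert h0st, Finset.sum_pair hst] at htr2'
          rw [hA00, hAss, hAtt, hAst, hAts, hX0j s hs0, hX0j t ht0, hXj0 s hs0,
            hXj0 t ht0] at htr2'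
          have key : (2 * (A 0 s * A s 0 + A 0 t * A t 0)) * X 0 0 = 0 := by
            linear_combination htr2' - A s 0 * he1 - A t 0 * he2
          rcases mul_eq_zero.mp key with h' | h'
          · exact absurd h' (mul_ne_zero two_ne_zero hβ)
          · exact h'
    -- final algebra
    have hXss0 : X s s = 0 := by
      have key2 : (A 0 s * A s 0 + A 0 t * A t 0) * X s s = 0 := by
        linear_combination A s 0 * he1 + A 0 t * he4 + (A 0 t * A t 0) * he5
          - (2 * (A 0 t * A t 0) - A 0 s * A s 0) * hX00
      rcases mul_eq_zero.mp key2 with h' | h'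
      · exact absurd h' hβ
      · exact h'
    have hXtt0 : X t t = 0 := by
      rw [hX00, hXss0] at he5; linarith
    have hXst0 : X s t = 0 := by
      have : A 0 t * X s t = 0 := by
        linear_combination he1 - A 0 s * hXss0 + A 0 s * hX00
      rcases mul_eq_zero.mp this with h' | h'
      · exact absurd h' hbt
      · exact h'
    have hXts0 : X t s = 0 := by
      have : X t s * A t 0 = 0 := by
        linear_combination - he3 + A s 0 * hX00 - A s 0 * hXss0
      rcases mul_eq_zero.mp this with h' | h'
      · exact h'
      · exact absurd h' hct
    ext i j
    rw [Matrix.zero_apply]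
    by_cases hi0 : i = 0
    · subst hi0
      by_cases hj0 : j = 0
      · subst hj0; exact hX00
      · exact hX0j j hj0
    · by_cases hj0 : j = 0
      · subst hj0; exact hXj0 i hi0
      · by_cases his : i = s
        · by_cases hjs : j = s
          · rw [his, hjs]; exact hXss0
          · by_cases hjt : j = t
            · rw [his, hjt]; exact hXst0
            · rw [his]; exact hsupp s j (Or.inr (hnotS j hjs hjt)) (fun hc => hs0 hc.1)
        · by_cases hit : i = t
          · by_cases hjs : j = s
            · rw [hit, hjs]; exact hXts0
            · by_cases hjt : j = t
              · rw [hit, hjt]; exact hXtt0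
              · rw [hit]; exact hsupp t j (Or.inr (hnotS j hjs hjt)) (fun hc => ht0 hc.1)
          · exact hsupp i j (Or.inl (hnotS i his hit)) (fun hc => hi0 hc.1)

theorem stmt_11 {n : ℕ} [NeZero n] (hn : 2 ≤ n) (𝒜 : Matrix (Fin n) (Fin n) SignType)
    (hstar : IsStarPattern 𝒜) :
    ¬ AllowsNSMP 𝒜 ↔
      (Finset.univ.filter (fun j : Fin n => j ≠ 0 ∧ 𝒜 j j ≠ 0)).card < n - 3 := by
  constructor
  · intro hnot
    by_contra hc
    push_neg at hc
    exact hnot (hard_dir hn 𝒜 hstar hc)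
  · intro hcard
    exact easy_dir 𝒜 hstar hcard
end

section
/- If an n×n sign pattern 𝒜 requires distinct eigenvalues, then 𝒜 requires the nSMP. -/
open Matrix

def HasDistinctEigenvalues {n : ℕ} (A : Matrix (Fin n) (Fin n) ℝ) : Prop :=
  ((A.map (algebraMap ℝ ℂ)).charpoly.roots.toFinset.card = n)

open Polynomial in
lemma key {n : ℕ} (A : Matrix (Fin n) (Fin n) ℝ)
    (hA : ((A.map (algebraMap ℝ ℂ)).charpoly.roots.toFinset.card = n))
    (X : Matrix (Fin n) (Fin n) ℝ)
    (hcomm : A * Xᵀ - Xᵀ * A = 0)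
    (htr : ∀ k : ℕ, k < n → (Xᵀ * A ^ k).trace = 0) : X = 0 := by
  set B : Matrix (Fin n) (Fin n) ℂ := A.map (algebraMap ℝ ℂ) with hB
  -- distinct roots enumeration
  let e := (B.charpoly.roots.toFinset).equivFin
  have hcard : (B.charpoly.roots.toFinset).card = n := hA
  let lam : Fin n → ℂ := fun i => (e.symm (Fin.cast hcard.symm i) : ℂ)
  have hlam_inj : Function.Injective lam := by
    intro i j hij
    have h1 := e.symm.injective (Subtype.coe_injective hij)
    simpa [Fin.ext_iff] using congrArg Fin.val h1
  have hlam_root : ∀ i, B.charpoly.IsRoot (lam i) := by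
    intro i
    have hmem : lam i ∈ B.charpoly.roots.toFinset := Finset.coe_mem _
    rw [Multiset.mem_toFinset, mem_roots (B.charpoly_monic.ne_zero)] at hmem
    exact hmem
  -- eigenvectors
  have hev : ∀ i : Fin n, ∃ v : Fin n → ℂ, v ≠ 0 ∧ B.mulVec v = lam i • v := by
    intro i
    have hdet : (Matrix.scalar (Fin n) (lam i) - B).det = 0 := by
      have h1 := hlam_root i
      rwa [IsRoot, Matrix.charpoly, _root_.eval_det, matPolyEquiv_charmatrix,
        eval_sub, eval_X, eval_C] at h1
    obtain ⟨v, hv0, hv⟩ := (Matrix.exists_mulVec_eq_zero_iff).2 hdet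
    refine ⟨v, hv0, ?_⟩
    rw [Matrix.sub_mulVec] at hv
    have h2 : (Matrix.scalar (Fin n) (lam i)).mulVec v = B.mulVec v := sub_eq_zero.mp hv
    rw [← h2]
    ext j
    rw [Matrix.scalar_apply, Matrix.mulVec_diagonal]
    simp
  choose v hv0 hvB using hev
  -- matrix of eigenvectors
  set P : Matrix (Fin n) (Fin n) ℂ := Matrix.of (fun i j => v j i) with hP
  have hPcols : (fun j => Pᵀ j) = v := by funext j; ext i; simp [hP]
  have hPunit : IsUnit P := by
    rw [← Matrix.linearIndependent_cols_iff_isUnit, show P.col = v from hPcols]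
    exact Module.End.eigenvectors_linearIndependent' (B.mulVecLin) lam hlam_inj v
      (fun i => ⟨Module.End.mem_eigenspace_iff.2 (by simpa using hvB i), hv0 i⟩)
  have hPdet : IsUnit P.det := (Matrix.isUnit_iff_isUnit_det P).1 hPunit
  have hPP : P * P⁻¹ = 1 := Matrix.mul_nonsing_inv P hPdet
  have hPP' : P⁻¹ * P = 1 := Matrix.nonsing_inv_mul P hPdet
  set D : Matrix (Fin n) (Fin n) ℂ := Matrix.diagonal lam with hD
  have hBP : B * P = P * D := by
    ext i j
    have h1 : (B * P) i j = (B.mulVec (v j)) i := by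
      simp [Matrix.mul_apply, Matrix.mulVec, dotProduct, hP]
    have h2 : (P * D) i j = v j i * lam j := by
      rw [hD, Matrix.mul_diagonal]; simp [hP]
    rw [h1, h2, hvB j]
    simp [mul_comm]
  have hPB : P⁻¹ * B = D * P⁻¹ := by
    calc P⁻¹ * B = P⁻¹ * B * (P * P⁻¹) := by rw [hPP, Matrix.mul_one]
      _ = P⁻¹ * (B * P) * P⁻¹ := by noncomm_ring
      _ = P⁻¹ * (P * D) * P⁻¹ := by rw [hBP]
      _ = (P⁻¹ * P) * D * P⁻¹ := by noncomm_ring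
      _ = D * P⁻¹ := by rw [hPP', Matrix.one_mul]
  -- complexified X transpose
  set Y : Matrix (Fin n) (Fin n) ℂ := Xᵀ.map (algebraMap ℝ ℂ) with hY
  have hAX : A * Xᵀ = Xᵀ * A := sub_eq_zero.mp hcomm
  have hYB : Y * B = B * Y := by
    rw [hY, hB, ← Matrix.map_mul, ← Matrix.map_mul, hAX]
  set Y' : Matrix (Fin n) (Fin n) ℂ := P⁻¹ * Y * P with hY'
  have hYconj : Y = P * Y' * P⁻¹ := by
    rw [hY']
    calc Y = (P * P⁻¹) * Y * (P * P⁻¹) := by rw [hPP]; noncomm_ring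
      _ = P * (P⁻¹ * Y * P) * P⁻¹ := by noncomm_ring
  have hY'D : Y' * D = D * Y' := by
    calc Y' * D = P⁻¹ * Y * (P * D) := by rw [hY']; noncomm_ring
      _ = P⁻¹ * Y * (B * P) := by rw [hBP]
      _ = P⁻¹ * (Y * B) * P := by noncomm_ring
      _ = P⁻¹ * (B * Y) * P := by rw [hYB]
      _ = (P⁻¹ * B) * (Y * P) := by noncomm_ring
      _ = (D * P⁻¹) * (Y * P) := by rw [hPB]
      _ = D * Y' := by rw [hY']; noncomm_ring
  have hoff : ∀ i j, i ≠ j → Y' i j = 0 := by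
    intro i j hij
    have h1 := congrFun (congrFun hY'D i) j
    rw [hD, Matrix.mul_diagonal, Matrix.diagonal_mul] at h1
    have h2 : Y' i j * (lam j - lam i) = 0 := by ring_nf; linear_combination h1
    rcases mul_eq_zero.1 h2 with h | h
    · exact h
    · exact absurd (hlam_inj (sub_eq_zero.mp h)).symm hij
  -- powers
  have hBk : ∀ k : ℕ, B ^ k = P * D ^ k * P⁻¹ := by
    intro k
    induction k with
    | zero => simp [hPP]
    | succ m ih =>
        calc B ^ (m + 1) = B ^ m * B := by rw [pow_succ]
          _ = (P * D ^ m * P⁻¹) * B := by rw [ih]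
          _ = P * D ^ m * (P⁻¹ * B) := by noncomm_ring
          _ = P * D ^ m * (D * P⁻¹) := by rw [hPB]
          _ = P * (D ^ m * D) * P⁻¹ := by noncomm_ring
          _ = P * D ^ (m + 1) * P⁻¹ := by rw [pow_succ]
  -- traces
  have htrC : ∀ k : ℕ, k < n → (Y' * D ^ k).trace = 0 := by
    intro k hk
    have hmapk : (A ^ k).map (algebraMap ℝ ℂ) = B ^ k := by
      rw [hB, ← RingHom.mapMatrix_apply, ← RingHom.mapMatrix_apply, map_pow]
    have hmul : Y * B ^ k = (Xᵀ * A ^ k).map (algebraMap ℝ ℂ) := by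
      rw [Matrix.map_mul, hmapk, hY]
    have h1 : (Y * B ^ k).trace = 0 := by
      have h2 := AddMonoidHom.map_trace ((algebraMap ℝ ℂ) : ℝ →+* ℂ) (Xᵀ * A ^ k)
      rw [htr k hk, map_zero] at h2
      rw [hmul]
      exact h2.symm
    have hconjtr : ∀ M : Matrix (Fin n) (Fin n) ℂ, (P * M * P⁻¹).trace = M.trace := by
      intro M
      rw [Matrix.trace_mul_cycle, hPP', Matrix.one_mul]
    have h3 : Y * B ^ k = P * (Y' * D ^ k) * P⁻¹ := by
      rw [hYconj, hBk k]
      calc P * Y' * P⁻¹ * (P * D ^ k * P⁻¹)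
          = P * Y' * ((P⁻¹ * P) * D ^ k) * P⁻¹ := by noncomm_ring
        _ = P * (Y' * D ^ k) * P⁻¹ := by rw [hPP']; noncomm_ring
    rw [← hconjtr (Y' * D ^ k), ← h3, h1]
  -- Vandermonde
  have hvdm : (fun i => Y' i i) ᵥ* (Matrix.vandermonde lam) = 0 := by
    ext k
    have h1 := htrC k k.2
    have h2 : (Y' * D ^ (k : ℕ)).trace = ∑ i, Y' i i * lam i ^ (k : ℕ) := by
      rw [hD, Matrix.diagonal_pow, Matrix.trace]
      simp [Matrix.diag, Matrix.mul_diagonal]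
    rw [h2] at h1
    simpa [Matrix.vecMul, dotProduct, Matrix.vandermonde] using h1
  have hvdmUnit : IsUnit (Matrix.vandermonde lam) := by
    rw [Matrix.isUnit_iff_isUnit_det, isUnit_iff_ne_zero]
    intro hdet
    rw [Matrix.det_vandermonde_eq_zero_iff] at hdet
    obtain ⟨i, j, hij, hne⟩ := hdet
    exact hne (hlam_inj hij)
  have hdiag : ∀ i, Y' i i = 0 := by
    intro i
    have hinj := Matrix.vecMul_injective_iff_isUnit.2 hvdmUnit
    have h1 : (fun i => Y' i i) ᵥ* (Matrix.vandermonde lam)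
        = (0 : Fin n → ℂ) ᵥ* (Matrix.vandermonde lam) := by
      rw [hvdm]; simp
    exact congrFun (hinj h1) i
  have hY'0 : Y' = 0 := by
    ext i j
    by_cases hij : i = j
    · subst hij; simpa using hdiag i
    · simpa using hoff i j hij
  have hY0 : Y = 0 := by rw [hYconj, hY'0]; simp
  ext i j
  have h1 := congrFun (congrFun hY0 j) i
  simp only [hY, Matrix.map_apply, Matrix.transpose_apply, Matrix.zero_apply] at h1
  show X i j = 0
  exact (algebraMap ℝ ℂ).injective (by simpa using h1)

theorem stmt_12 {n : ℕ} (𝒜 : Matrix (Fin n) (Fin n) SignType)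
    (h : ∀ A ∈ QClass 𝒜, HasDistinctEigenvalues A) :
    RequiresNSMP 𝒜 := by
  intro A hA X hX1 hX2 hX3
  exact key A (h A hA) X hX2 hX3
end

section
/- The 3×3 sign pattern 𝒜 with rows (0, +, 0), (+, 0, +), (+, 0, 0) requires the nSMP but does not require distinct eigenvalues (for instance, the realization A with rows (0, 1, 0), (3, 0, 1), (2, 0, 0) belongs to Q(𝒜) and has −1 as a repeated eigenvalue). Hence the converse of the implication 'requires distinct eigenvalues ⇒ requires the nSMP' fails. -/
open Matrix

lemma aux_requires :
    ∀ A ∈ QClass (!![0,1,0;1,0,1;1,0,0] : Matrix (Fin 3) (Fin 3) SignType), HasNSMP A := by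
  intro A hA X hX hC hT
  have s00 : A 0 0 = 0 := by
    have := hA 0 0; simpa [sign_eq_zero_iff, Matrix.vecHead, Matrix.vecTail] using this
  have s01 : 0 < A 0 1 := by
    have := hA 0 1; simpa [sign_eq_one_iff, Matrix.vecHead, Matrix.vecTail] using this
  have s02 : A 0 2 = 0 := by
    have := hA 0 2; simpa [sign_eq_zero_iff, Matrix.vecHead, Matrix.vecTail] using this
  have s10 : 0 < A 1 0 := by
    have := hA 1 0; simpa [sign_eq_one_iff, Matrix.vecHead, Matrix.vecTail] using this
  have s11 : A 1 1 = 0 := by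
    have := hA 1 1; simpa [sign_eq_zero_iff, Matrix.vecHead, Matrix.vecTail] using this
  have s12 : 0 < A 1 2 := by
    have := hA 1 2; simpa [sign_eq_one_iff, Matrix.vecHead, Matrix.vecTail] using this
  have s20 : 0 < A 2 0 := by
    have := hA 2 0; simpa [sign_eq_one_iff, Matrix.vecHead, Matrix.vecTail] using this
  have s21 : A 2 1 = 0 := by
    have := hA 2 1; simpa [sign_eq_zero_iff, Matrix.vecHead, Matrix.vecTail] using this
  have s22 : A 2 2 = 0 := by
    have := hA 2 2; simpa [sign_eq_zero_iff, Matrix.vecHead, Matrix.vecTail] using this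
  have x01 : X 0 1 = 0 := by
    have := congrFun (congrFun hX 0) 1
    simp [Matrix.hadamard_apply] at this
    exact this.resolve_left s01.ne'
  have x10 : X 1 0 = 0 := by
    have := congrFun (congrFun hX 1) 0
    simp [Matrix.hadamard_apply] at this
    exact this.resolve_left s10.ne'
  have x12 : X 1 2 = 0 := by
    have := congrFun (congrFun hX 1) 2
    simp [Matrix.hadamard_apply] at this
    exact this.resolve_left s12.ne'
  have x20 : X 2 0 = 0 := by
    have := congrFun (congrFun hX 2) 0
    simp [Matrix.hadamard_apply] at this
    exact this.resolve_left s20.ne'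
  have c01 := congrFun (congrFun hC 0) 1
  have c02 := congrFun (congrFun hC 0) 2
  have c10 := congrFun (congrFun hC 1) 0
  have c12 := congrFun (congrFun hC 1) 2
  simp only [Matrix.sub_apply, Matrix.mul_apply, Fin.sum_univ_three, Matrix.transpose_apply,
    Matrix.zero_apply, s00, s02, s11, s21, s22, x01, x10, x12, x20, sub_eq_zero,
    zero_mul, mul_zero, add_zero, zero_add] at c01 c02 c10 c12
  have e1 : X 1 1 = X 0 0 :=
    mul_left_cancel₀ s01.ne' (by linarith : A 0 1 * X 1 1 = A 0 1 * X 0 0)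
  have x21 : X 2 1 = 0 :=
    (mul_eq_zero.mp (by linarith : A 0 1 * X 2 1 = 0)).resolve_left s01.ne'
  have x02 : X 0 2 = 0 := by
    rw [e1, x21, zero_mul, add_zero] at c10
    have : A 1 2 * X 0 2 = 0 := by linarith
    exact (mul_eq_zero.mp this).resolve_left s12.ne'
  have e2 : X 2 2 = X 1 1 :=
    mul_left_cancel₀ s12.ne' (by linarith : A 1 2 * X 2 2 = A 1 2 * X 1 1)
  have ht := hT 0 (by norm_num)
  rw [pow_zero, mul_one, Matrix.trace_fin_three] at ht
  simp only [Matrix.transpose_apply] at ht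
  have x00 : X 0 0 = 0 := by linarith
  have x11 : X 1 1 = 0 := by linarith
  have x22 : X 2 2 = 0 := by linarith
  ext i j
  fin_cases i <;> fin_cases j <;>
    simp [x00, x01, x02, x10, x11, x12, x20, x21, x22]

open Polynomial in
lemma aux_charpoly :
    ((!![(0:ℝ),1,0;3,0,1;2,0,0]).map (algebraMap ℝ ℂ)).charpoly
      = (X - C (-1))^2 * (X - C 2) := by
  have h : (!![(0:ℝ),1,0;3,0,1;2,0,0]).map (algebraMap ℝ ℂ) = !![(0:ℂ),1,0;3,0,1;2,0,0] := by
    ext i j; fin_cases i <;> fin_cases j <;>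
      norm_num [Matrix.map_apply, Matrix.vecHead, Matrix.vecTail]
  rw [h, Matrix.charpoly, Matrix.det_fin_three]
  simp [charmatrix_apply_eq, charmatrix_apply_ne, Matrix.charmatrix, Matrix.vecHead,
    Matrix.vecTail, map_ofNat]
  ring

open Polynomial in
lemma aux_roots_card :
    (((X - C (-1))^2 * (X - C 2) : Polynomial ℂ)).roots.toFinset.card = 2 := by
  have h1 : ((X - C (-1))^2 * (X - C 2) : Polynomial ℂ).roots = {-1, -1, 2} := by
    rw [roots_mul (by apply mul_ne_zero <;>
        [exact pow_ne_zero _ (X_sub_C_ne_zero _); exact X_sub_C_ne_zero _]),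
      roots_pow, roots_X_sub_C, roots_X_sub_C]
    rfl
  rw [h1]
  have h2 : ({-1, -1, 2} : Multiset ℂ).toFinset = {-1, 2} := by
    simp [Multiset.toFinset_cons, Multiset.toFinset_singleton, Finset.insert_idem]
  rw [h2, Finset.card_insert_of_notMem (by norm_num), Finset.card_singleton]

theorem stmt_13 :
    let 𝒜 : Matrix (Fin 3) (Fin 3) SignType := !![0, 1, 0; 1, 0, 1; 1, 0, 0]
    let A : Matrix (Fin 3) (Fin 3) ℝ := !![0, 1, 0; 3, 0, 1; 2, 0, 0]
    RequiresNSMP 𝒜 ∧ A ∈ QClass 𝒜 ∧ ¬ HasDistinctEigenvalues A ∧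
      ¬ (∀ B ∈ QClass 𝒜, HasDistinctEigenvalues B) := by
  intro 𝒜 A
  have hmem : A ∈ QClass 𝒜 := by
    intro i j
    fin_cases i <;> fin_cases j <;>
      norm_num [A, 𝒜, sign_eq_one_iff, sign_eq_zero_iff, Matrix.vecHead, Matrix.vecTail]
  have hnd : ¬ HasDistinctEigenvalues A := by
    unfold HasDistinctEigenvalues
    rw [show A = !![(0:ℝ),1,0;3,0,1;2,0,0] from rfl, aux_charpoly, aux_roots_card]
    norm_num
  exact ⟨aux_requires, hmem, hnd, fun h => hnd (h A hmem)⟩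
end

section
/- Let 𝒜 be a 2×2 sign pattern. Then: (i) if 𝒜_{12} ≠ 0 and 𝒜_{21} ≠ 0 (𝒜 is irreducible), then 𝒜 requires the nSMP; (ii) if 𝒜_{12} = 0 or 𝒜_{21} = 0, and 𝒜_{11} ≠ 𝒜_{22} as elements of {+, −, 0}, then 𝒜 requires the nSMP; (iii) if 𝒜_{12} = 0 or 𝒜_{21} = 0, and 𝒜_{11} = 𝒜_{22} = 0, then 𝒜 does not allow the nSMP; (iv) if 𝒜_{12} = 0 or 𝒜_{21} = 0, and 𝒜_{11} = 𝒜_{22} ≠ 0, then 𝒜 allows the nSMP but does not require the nSMP. -/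
open Matrix

lemma sign_coe_real (s : SignType) : SignType.sign ((s:ℝ)) = s := by
  cases s <;> simp

lemma sign_two_coe_real (s : SignType) : SignType.sign (2*(s:ℝ)) = s := by
  cases s <;> norm_num

/-- Main sufficient criterion for a 2×2 real matrix to have the nSMP. -/
lemma hasNSMP_of (A : Matrix (Fin 2) (Fin 2) ℝ)
    (h : (A 0 1 ≠ 0 ∧ A 1 0 ≠ 0) ∨ ((A 0 1 = 0 ∨ A 1 0 = 0) ∧ A 0 0 ≠ A 1 1)) :
    HasNSMP A := by
  intro X h1 h2 h3
  have e00 : A 0 0 * X 0 0 = 0 := by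
    have := congrFun (congrFun h1 0) 0; simpa [Matrix.hadamard_apply] using this
  have e01 : A 0 1 * X 0 1 = 0 := by
    have := congrFun (congrFun h1 0) 1; simpa [Matrix.hadamard_apply] using this
  have e10 : A 1 0 * X 1 0 = 0 := by
    have := congrFun (congrFun h1 1) 0; simpa [Matrix.hadamard_apply] using this
  have e11 : A 1 1 * X 1 1 = 0 := by
    have := congrFun (congrFun h1 1) 1; simpa [Matrix.hadamard_apply] using this
  have c01 : A 0 0 * X 1 0 + A 0 1 * X 1 1 = X 0 0 * A 0 1 + X 1 0 * A 1 1 := by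
    have := congrFun (congrFun h2 0) 1
    simpa [Matrix.sub_apply, Matrix.mul_apply, Fin.sum_univ_two, Matrix.transpose_apply,
      sub_eq_zero] using this
  have c10 : A 1 0 * X 0 0 + A 1 1 * X 0 1 = X 0 1 * A 0 0 + X 1 1 * A 1 0 := by
    have := congrFun (congrFun h2 1) 0
    simpa [Matrix.sub_apply, Matrix.mul_apply, Fin.sum_univ_two, Matrix.transpose_apply,
      sub_eq_zero] using this
  have t0 : X 0 0 + X 1 1 = 0 := by
    have := h3 0 (by norm_num)
    simpa [Matrix.trace, Matrix.diag, Matrix.mul_apply, Fin.sum_univ_two,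
      Matrix.transpose_apply] using this
  -- derive that all four entries vanish
  have key : X 0 0 = 0 ∧ X 0 1 = 0 ∧ X 1 0 = 0 ∧ X 1 1 = 0 := by
    rcases h with ⟨hb, hc⟩ | ⟨hbc, had⟩
    · -- irreducible case
      have hy : X 0 1 = 0 := by
        rcases mul_eq_zero.mp e01 with h | h
        · exact absurd h hb
        · exact h
      have hz : X 1 0 = 0 := by
        rcases mul_eq_zero.mp e10 with h | h
        · exact absurd h hc
        · exact h
      have hwx : A 0 1 * (X 1 1 - X 0 0) = 0 := by
        rw [hz] at c01; linear_combination c01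
      have hwx' : X 1 1 = X 0 0 := by
        rcases mul_eq_zero.mp hwx with h | h
        · exact absurd h hb
        · linarith [sub_eq_zero.mp h]
      refine ⟨by linarith, hy, hz, by linarith⟩
    · -- a ≠ d, and one of a, d is nonzero
      have hxw : X 0 0 = 0 ∧ X 1 1 = 0 := by
        rcases eq_or_ne (A 0 0) 0 with ha | ha
        · have hd : A 1 1 ≠ 0 := fun h => had (ha.trans h.symm)
          have hw : X 1 1 = 0 := by
            rcases mul_eq_zero.mp e11 with h | h
            · exact absurd h hd
            · exact h
          exact ⟨by linarith, hw⟩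
        · have hx : X 0 0 = 0 := by
            rcases mul_eq_zero.mp e00 with h | h
            · exact absurd h ha
            · exact h
          exact ⟨hx, by linarith⟩
      obtain ⟨hx, hw⟩ := hxw
      rcases hbc with hb | hc
      · -- A 0 1 = 0
        have hz : X 1 0 = 0 := by
          have h' : X 1 0 * (A 0 0 - A 1 1) = 0 := by
            rw [hb] at c01; linear_combination c01
          rcases mul_eq_zero.mp h' with h | h
          · exact h
          · exact absurd (sub_eq_zero.mp h) had
        have hy : X 0 1 = 0 := by
          have h' : X 0 1 * (A 1 1 - A 0 0) = 0 := by
            rw [hx, hw] at c10; linear_combination c10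
          rcases mul_eq_zero.mp h' with h | h
          · exact h
          · exact absurd (sub_eq_zero.mp h).symm had
        exact ⟨hx, hy, hz, hw⟩
      · -- A 1 0 = 0
        have hy : X 0 1 = 0 := by
          have h' : X 0 1 * (A 1 1 - A 0 0) = 0 := by
            rw [hc] at c10; linear_combination c10
          rcases mul_eq_zero.mp h' with h | h
          · exact h
          · exact absurd (sub_eq_zero.mp h).symm had
        have hz : X 1 0 = 0 := by
          have h' : X 1 0 * (A 0 0 - A 1 1) = 0 := by
            rw [hx, hw] at c01; linear_combination c01
          rcases mul_eq_zero.mp h' with h | h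
          · exact h
          · exact absurd (sub_eq_zero.mp h) had
        exact ⟨hx, hy, hz, hw⟩
  obtain ⟨hx, hy, hz, hw⟩ := key
  ext i j
  fin_cases i <;> fin_cases j <;> simp [hx, hy, hz, hw]

/-- If one off-diagonal entry vanishes and the diagonal entries are equal,
the matrix fails the nSMP. -/
lemma not_hasNSMP (A : Matrix (Fin 2) (Fin 2) ℝ)
    (h : A 0 1 = 0 ∨ A 1 0 = 0) (had : A 0 0 = A 1 1) : ¬ HasNSMP A := by
  rcases h with hb | hc
  · intro hN
    have := hN (Matrix.of fun i j : Fin 2 => if i = 0 ∧ j = 1 then (1:ℝ) else 0) ?_ ?_ ?_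
    · have h01 := congrFun (congrFun this 0) 1
      simp [Matrix.of_apply] at h01
    · ext i j
      fin_cases i <;> fin_cases j <;>
        simp [Matrix.hadamard_apply, Matrix.of_apply, hb]
    · ext i j
      fin_cases i <;> fin_cases j <;>
        simp [Matrix.sub_apply, Matrix.mul_apply, Fin.sum_univ_two, Matrix.transpose_apply,
          Matrix.of_apply, hb, had]
    · intro k hk
      interval_cases k <;>
        simp [Matrix.trace, Matrix.diag, Matrix.mul_apply, Fin.sum_univ_two,
          Matrix.transpose_apply, Matrix.of_apply, pow_zero, pow_one, Matrix.mul_one, hb]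
  · intro hN
    have := hN (Matrix.of fun i j : Fin 2 => if i = 1 ∧ j = 0 then (1:ℝ) else 0) ?_ ?_ ?_
    · have h10 := congrFun (congrFun this 1) 0
      simp [Matrix.of_apply] at h10
    · ext i j
      fin_cases i <;> fin_cases j <;>
        simp [Matrix.hadamard_apply, Matrix.of_apply, hc]
    · ext i j
      fin_cases i <;> fin_cases j <;>
        simp [Matrix.sub_apply, Matrix.mul_apply, Fin.sum_univ_two, Matrix.transpose_apply,
          Matrix.of_apply, hc, had]
    · intro k hk
      interval_cases k <;>
        simp [Matrix.trace, Matrix.diag, Matrix.mul_apply, Fin.sum_univ_two,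
          Matrix.transpose_apply, Matrix.of_apply, pow_zero, pow_one, Matrix.mul_one, hc]

theorem stmt_15 (𝒜 : Matrix (Fin 2) (Fin 2) SignType) :
    ((𝒜 0 1 ≠ 0 ∧ 𝒜 1 0 ≠ 0) → RequiresNSMP 𝒜) ∧
    ((𝒜 0 1 = 0 ∨ 𝒜 1 0 = 0) → 𝒜 0 0 ≠ 𝒜 1 1 → RequiresNSMP 𝒜) ∧
    ((𝒜 0 1 = 0 ∨ 𝒜 1 0 = 0) → 𝒜 0 0 = 0 → 𝒜 1 1 = 0 → ¬ AllowsNSMP 𝒜) ∧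
    ((𝒜 0 1 = 0 ∨ 𝒜 1 0 = 0) → 𝒜 0 0 = 𝒜 1 1 → 𝒜 0 0 ≠ 0 →
      AllowsNSMP 𝒜 ∧ ¬ RequiresNSMP 𝒜) := by
  refine ⟨?_, ?_, ?_, ?_⟩
  · rintro ⟨h1, h2⟩ A hA
    apply hasNSMP_of
    left
    exact ⟨fun h => h1 (by rw [← hA 0 1, h, sign_zero]),
           fun h => h2 (by rw [← hA 1 0, h, sign_zero])⟩
  · intro hbc had A hA
    apply hasNSMP_of
    right
    refine ⟨?_, fun h => had (by rw [← hA 0 0, ← hA 1 1, h])⟩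
    rcases hbc with h | h
    · exact Or.inl (sign_eq_zero_iff.mp ((hA 0 1).trans h))
    · exact Or.inr (sign_eq_zero_iff.mp ((hA 1 0).trans h))
  · rintro hbc h00 h11 ⟨A, hA, hN⟩
    have hd : A 0 0 = A 1 1 := by
      rw [sign_eq_zero_iff.mp ((hA 0 0).trans h00), sign_eq_zero_iff.mp ((hA 1 1).trans h11)]
    have hb : A 0 1 = 0 ∨ A 1 0 = 0 := by
      rcases hbc with h | h
      · exact Or.inl (sign_eq_zero_iff.mp ((hA 0 1).trans h))
      · exact Or.inr (sign_eq_zero_iff.mp ((hA 1 0).trans h))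
    exact not_hasNSMP A hb hd hN
  · intro hbc heq hne
    constructor
    · -- allows: perturb the (0,0) entry to make the diagonal entries distinct
      refine ⟨!![2*(𝒜 0 0 : ℝ), (𝒜 0 1 : ℝ); (𝒜 1 0 : ℝ), (𝒜 1 1 : ℝ)], ?_, ?_⟩
      · intro i j
        fin_cases i <;> fin_cases j <;>
          simp [sign_coe_real, sign_two_coe_real]
      · apply hasNSMP_of
        right
        have hc0 : (𝒜 0 0 : ℝ) ≠ 0 := by
          cases h : 𝒜 0 0 with
          | zero => exact absurd h hne
          | neg => norm_num
          | pos => norm_num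
        constructor
        · rcases hbc with h | h
          · left; simp [h]
          · right; simp [h]
        · show (2 * (𝒜 0 0 : ℝ)) ≠ (𝒜 1 1 : ℝ)
          rw [← heq]
          intro h
          apply hc0
          linarith
    · -- does not require: the "canonical" representative fails nSMP
      intro hreq
      have hmem : (Matrix.of fun i j => ((𝒜 i j : ℝ))) ∈ QClass 𝒜 := by
        intro i j
        simp [Matrix.of_apply, sign_coe_real]
      have hN := hreq _ hmem
      apply not_hasNSMP _ ?_ ?_ hN
      · rcases hbc with h | h
        · left; simp [h]
        · right; simp [h]
      · simp [heq]
end
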